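/- arXiv:math/0306270 — 8 statements merged into one kernel-verified Lean document; each statement's English description precedes it below -/
import Mathlib

section
/- Let R be a commutative integral domain, d ≥ 1, and let f, g ∈ R[[X_1,…,X_d]] be formal power series such that f·g = X^a·u for some a ∈ ℕ^d and some unit u of R[[X_1,…,X_d]]. Then there exist b, c ∈ ℕ^d with b + c = a and units u₁, u₂ of R[[X_1,…,X_d]] such that f = X^b·u₁ and g = X^c·u₂. (Equivalently: if the Newton polyhedron of a product of nonzero power series has only one vertex, then the Newton polyhedron of each factor has only one vertex.) -/
/-!
The variables `X s` are prime elements of `R[[X_1,…,X_d]]` when `R` is a domain: `X s ∣ φ`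
says that `φ` has order at least one for the weight counting only the exponent of `X s`, and
weighted orders are additive over a domain. The monomial `X^a` is then a product of prime
powers, and splitting off one prime power at a time divides `X^a` between the two factors,
while `u` splits as a product of two units.
-/

open MvPowerSeries

section CancelCommMonoidWithZero

variable {M σ : Type*} [CommMonoidWithZero M] [IsCancelMulZero M]

theorem mul_eq_mul_finsuppProd_prime_pow {p : σ → M} (hp : ∀ s, Prime (p s))
    {e : σ →₀ ℕ} :
    ∀ {x y w : M}, x * y = w * e.prod (fun s k ↦ p s ^ k) →
      ∃ (b c : σ →₀ ℕ) (w₁ w₂ : M), b + c = e ∧ w = w₁ * w₂ ∧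
        x = w₁ * b.prod (fun s k ↦ p s ^ k) ∧ y = w₂ * c.prod (fun s k ↦ p s ^ k) := by
  induction e using Finsupp.induction with
  | zero => exact fun {x y w} h ↦ ⟨0, 0, x, y, by simp_all⟩
  | single_add s n e _ _ ih =>
    have prod_single_add (k : ℕ) (e : σ →₀ ℕ) :
        (Finsupp.single s k + e).prod (fun s k ↦ p s ^ k) =
          p s ^ k * e.prod (fun s k ↦ p s ^ k) := by
      rw [Finsupp.prod_add_index' (fun _ ↦ pow_zero _) (fun _ _ _ ↦ pow_add _ _ _),
        Finsupp.prod_single_index (h := fun s k ↦ p s ^ k) (pow_zero _)]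
    intro x y w h
    rw [prod_single_add, mul_comm (p s ^ n), ← mul_assoc] at h
    obtain ⟨i, j, x', y', hij, hxy', rfl, rfl⟩ := mul_eq_mul_prime_pow (hp s) h
    obtain ⟨b, c, w₁, w₂, hbc, hw, rfl, rfl⟩ := ih hxy'.symm
    refine ⟨Finsupp.single s i + b, Finsupp.single s j + c, w₁, w₂, ?_, hw, ?_, ?_⟩
    · rw [add_add_add_comm, ← Finsupp.single_add, hij, hbc]
    all_goals rw [prod_single_add]; ac_rfl

end CancelCommMonoidWithZero

namespace MvPowerSeries

variable {σ R : Type*}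

theorem X_dvd_iff_one_le_weightedOrder [CommSemiring R] [DecidableEq σ] {s : σ}
    {φ : MvPowerSeries σ R} : X s ∣ φ ↔ 1 ≤ φ.weightedOrder (Pi.single s 1) := by
  simp_rw [X_dvd_iff, ← Finsupp.weight_single_one_apply s]
  refine ⟨fun h ↦ le_weightedOrder _ fun m hm ↦ h m ?_, fun h m hm ↦ ?_⟩
  · exact_mod_cast Order.lt_one_iff.mp hm
  · refine coeff_eq_zero_of_lt_weightedOrder (Pi.single s 1) (lt_of_lt_of_le ?_ h)
    simp [hm]

theorem prime_X [CommRing R] [IsDomain R] (s : σ) : Prime (X s : MvPowerSeries σ R) := by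
  classical
  refine ⟨fun h ↦ by simpa using congrArg (coeff (Finsupp.single s 1)) h,
    fun h ↦ by simpa using (isUnit_iff_constantCoeff.mp h), fun φ ψ h ↦ ?_⟩
  simp_rw [X_dvd_iff_one_le_weightedOrder, weightedOrder_mul] at h ⊢
  by_contra! hlt
  simp_all [Order.lt_one_iff]

end MvPowerSeries

theorem stmt_0_general (R : Type*) [CommRing R] [IsDomain R] (d : ℕ)
    (f g u : MvPowerSeries (Fin d) R) (a : Fin d →₀ ℕ)
    (hu : IsUnit u)
    (h : f * g = MvPowerSeries.monomial a 1 * u) :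
    ∃ (b c : Fin d →₀ ℕ) (u₁ u₂ : MvPowerSeries (Fin d) R),
      IsUnit u₁ ∧ IsUnit u₂ ∧ b + c = a ∧
      f = MvPowerSeries.monomial b 1 * u₁ ∧
      g = MvPowerSeries.monomial c 1 * u₂ := by
  rw [monomial_one_eq, mul_comm _ u] at h
  obtain ⟨b, c, u₁, u₂, hbc, rfl, rfl, rfl⟩ := mul_eq_mul_finsuppProd_prime_pow prime_X h
  refine ⟨b, c, u₁, u₂, isUnit_of_mul_isUnit_left hu, isUnit_of_mul_isUnit_right hu, hbc,
    ?_, ?_⟩ <;> rw [monomial_one_eq, mul_comm]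

/-- If a product of two formal power series over a domain equals a monomial
times a unit, then each factor is a monomial times a unit, and the exponents add up. -/
theorem stmt_0 (R : Type*) [CommRing R] [IsDomain R] (d : ℕ) (hd : 1 ≤ d)
    (f g u : MvPowerSeries (Fin d) R) (a : Fin d →₀ ℕ)
    (hu : IsUnit u)
    (h : f * g = MvPowerSeries.monomial a 1 * u) :
    ∃ (b c : Fin d →₀ ℕ) (u₁ u₂ : MvPowerSeries (Fin d) R),
      IsUnit u₁ ∧ IsUnit u₂ ∧ b + c = a ∧
      f = MvPowerSeries.monomial b 1 * u₁ ∧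
      g = MvPowerSeries.monomial c 1 * u₂ :=
  stmt_0_general R d f g u a hu h
end

section
/- Let V be a finite-dimensional real vector space with dual V*, let ρ ⊆ V be a polyhedral convex cone with dual cone ρ^∨ := {u ∈ V* : u(x) ≥ 0 for all x ∈ ρ}, let W ⊆ V* be a linear subspace, let ℓ := {x ∈ V : w(x) = 0 for all w ∈ W}, and set σ₀ := ρ ∩ ℓ. Then the dual cone of σ₀ equals ρ^∨ + W. If moreover the image of ρ^∨ under the quotient map V* → V*/W is a strictly convex cone, then σ₀^⊥ := {u ∈ V* : u(x) = 0 for all x ∈ σ₀} equals W. -/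
/-!
The inclusion `ρ^∨ + W ⊆ σ₀^∨` is immediate. Conversely, if `u ≥ 0` on `ρ ∩ ℓ`, the image of `ρ`
under `x ↦ (u x, [x]) ∈ ℝ × V/ℓ` is a finitely generated cone missing `(-1, 0)`. Farkas' lemma
separates them by a functional `f` with `f (1, 0) > 0`; rescaled, it writes `u` as an element of
`ρ^∨` plus a functional vanishing on `ℓ`, i.e. an element of `ℓ^⊥ = W`. Farkas' lemma is the
Hahn–Banach separation from a closed cone: by the conic Carathéodory theorem a finitely generated
cone is a finite union of images of orthants under injective linear maps.

If `u` vanishes on `σ₀`, both `u` and `-u` lie in `ρ^∨ + W`, so `±[u]` lie in the image of `ρ^∨`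
in `V*/W`, and strict convexity forces `[u] = 0`.
-/

/-- A polyhedral convex cone: the set of nonnegative linear combinations of finitely many
vectors. -/
def IsPolyhedralCone {V : Type*} [AddCommGroup V] [Module ℝ V] (C : Set V) : Prop :=
  ∃ (n : ℕ) (v : Fin n → V),
    C = {x | ∃ c : Fin n → ℝ, (∀ i, 0 ≤ c i) ∧ x = ∑ i, c i • v i}

open Module Function

section

variable {ι E : Type*} [Fintype ι] [AddCommGroup E] [Module ℝ E]

def conicCombinations (v : ι → E) : PointedCone ℝ E :=
  .ofConeComb {x | ∃ c : ι → ℝ, (∀ i, 0 ≤ c i) ∧ x = ∑ i, c i • v i}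
    ⟨0, 0, fun _ => le_rfl, by simp⟩ <| by
      rintro _ ⟨c, hc, rfl⟩ _ ⟨d, hd, rfl⟩ a ha b hb
      refine ⟨a • c + b • d, fun i => add_nonneg (mul_nonneg ha (hc i)) (mul_nonneg hb (hd i)), ?_⟩
      simp [add_smul, mul_smul, Finset.sum_add_distrib, Finset.smul_sum]

theorem mem_conicCombinations {v : ι → E} {x : E} :
    x ∈ conicCombinations v ↔ ∃ c : ι → ℝ, (∀ i, 0 ≤ c i) ∧ x = ∑ i, c i • v i := Iff.rfl

theorem generator_mem_conicCombinations (v : ι → E) (i : ι) : v i ∈ conicCombinations v := by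
  classical
  exact ⟨Pi.single i 1, fun j => by by_cases h : j = i <;> simp [h], by simp [Pi.single_apply]⟩

theorem map_conicCombinations (v : ι → E) {F : Type*} [AddCommGroup F] [Module ℝ F]
    (f : E →ₗ[ℝ] F) : (conicCombinations v).map f = conicCombinations (f ∘ v) := by
  ext y
  simp only [PointedCone.mem_map, mem_conicCombinations]
  constructor
  · rintro ⟨_, ⟨c, hc, rfl⟩, rfl⟩
    exact ⟨c, hc, by simp⟩
  · rintro ⟨c, hc, rfl⟩
    exact ⟨_, ⟨c, hc, rfl⟩, by simp⟩

theorem exists_pos_of_not_linearIndepOn {v : ι → E} {s : Set ι} (h : ¬LinearIndepOn ℝ v s) :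
    ∃ g : ι → ℝ, support g ⊆ s ∧ ∑ i, g i • v i = 0 ∧ ∃ j, 0 < g j := by
  classical
  simp only [linearIndepOn_iff'', not_forall] at h
  obtain ⟨t, g, hts, hgt, hsum, j, -, hj⟩ := h
  have hsupp : support g ⊆ t := fun i hi => by_contra fun hit => hi (hgt i hit)
  have hsum' : ∑ i, g i • v i = 0 := by
    rw [← hsum, Finset.sum_subset (Finset.subset_univ t) fun i _ hit => by simp [hgt i hit]]
  rcases Ne.lt_or_gt hj with hneg | hpos
  · exact ⟨-g, by simpa using hsupp.trans hts, by simp [neg_smul, hsum'], j, by simpa⟩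
  · exact ⟨g, hsupp.trans hts, hsum', j, hpos⟩

theorem exists_support_ssubset_sum_smul_eq {v : ι → E} {c g : ι → ℝ} (hc : 0 ≤ c)
    (hgc : support g ⊆ support c) (hg : ∑ i, g i • v i = 0) {j : ι} (hj : 0 < g j) :
    ∃ c' : ι → ℝ, 0 ≤ c' ∧ support c' ⊂ support c ∧ ∑ i, c' i • v i = ∑ i, c i • v i := by
  classical
  obtain ⟨k, hk, hmin⟩ := Finset.exists_min_image {i | 0 < g i} (fun i => c i / g i) ⟨j, by simpa⟩
  simp only [Finset.mem_filter, Finset.mem_univ, true_and] at hk hmin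
  -- the largest step along `-g` that keeps the coefficients nonnegative; it kills `c k`
  set α := c k / g k
  have hα : 0 ≤ α := div_nonneg (hc k) hk.le
  refine ⟨c - α • g, fun i => ?_, ?_, ?_⟩
  · rcases le_or_gt (g i) 0 with hgi | hgi
    · have : 0 ≤ c i := hc i
      simp only [Pi.sub_apply, Pi.smul_apply, smul_eq_mul, Pi.zero_apply]
      nlinarith
    · simpa [mul_comm] using (le_div_iff₀ hgi).1 (hmin i hgi)
  · refine LE.le.ssubset_of_mem_notMem (a := k) (fun i hi => ?_) (hgc hk.ne') ?_
    · by_contra hci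
      have hgi : g i = 0 := by_contra fun h => hci (hgc h)
      simp [notMem_support.1 hci, hgi] at hi
    · simp [α, div_mul_cancel₀ _ hk.ne']
  · simp [sub_smul, mul_smul, Finset.sum_sub_distrib, ← Finset.smul_sum, hg]

theorem exists_linearIndepOn_support_sum_smul_eq (v : ι → E) (c : ι → ℝ) (hc : 0 ≤ c) :
    ∃ d : ι → ℝ, 0 ≤ d ∧ LinearIndepOn ℝ v (support d) ∧ ∑ i, d i • v i = ∑ i, c i • v i := by
  induction hn : (support c).ncard using Nat.strong_induction_on generalizing c with
  | _ n ih => ?_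
  by_cases hli : LinearIndepOn ℝ v (support c)
  · exact ⟨c, hc, hli, rfl⟩
  obtain ⟨g, hgc, hg, j, hj⟩ := exists_pos_of_not_linearIndepOn hli
  obtain ⟨c', hc', hlt, hsum⟩ := exists_support_ssubset_sum_smul_eq hc hgc hg hj
  obtain ⟨d, hd, hli', hd'⟩ := ih _ (hn ▸ Set.ncard_lt_ncard hlt) c' hc' rfl
  exact ⟨d, hd, hli', hd'.trans hsum⟩

theorem conicCombinations_eq_iUnion (v : ι → E) :
    (conicCombinations v : Set E) = ⋃ (s : Finset ι) (_ : LinearIndepOn ℝ v s),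
      Fintype.linearCombination ℝ (fun i : s => v i) '' Set.Ici 0 := by
  classical
  ext x
  simp only [Set.mem_iUnion, Set.mem_image, Set.mem_Ici, Fintype.linearCombination_apply]
  constructor
  · rintro ⟨c, hc, rfl⟩
    obtain ⟨d, hd, hli, hsum⟩ := exists_linearIndepOn_support_sum_smul_eq v c hc
    refine ⟨(support d).toFinset, by simpa using hli, fun i => d i, fun i => hd i, ?_⟩
    rw [← hsum, Finset.sum_coe_sort _ fun i => d i • v i]
    exact Finset.sum_subset (Finset.subset_univ _) fun i _ hi => by simp_all
  · rintro ⟨s, -, d, hd, rfl⟩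
    exact Submodule.sum_mem _ fun i _ =>
      PointedCone.smul_mem _ (hd i) (generator_mem_conicCombinations v i)

section Topological

variable [TopologicalSpace E] [IsTopologicalAddGroup E] [ContinuousSMul ℝ E] [T2Space E]

theorem isClosed_conicCombinations (v : ι → E) : IsClosed (conicCombinations v : Set E) := by
  rw [conicCombinations_eq_iUnion]
  refine isClosed_iUnion_of_finite fun s => isClosed_iUnion_of_finite fun hli => ?_
  exact (LinearMap.isClosedEmbedding_of_injective (LinearMap.ker_eq_bot.2
    hli.fintypeLinearCombination_injective)).isClosedMap _ isClosed_Ici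

theorem exists_strongDual_of_notMem_conicCombinations [LocallyConvexSpace ℝ E] (v : ι → E)
    {b : E} (hb : b ∉ conicCombinations v) :
    ∃ f : StrongDual ℝ E, (∀ x ∈ conicCombinations v, 0 ≤ f x) ∧ f b < 0 :=
  ProperCone.hyperplane_separation_point ⟨conicCombinations v, isClosed_conicCombinations v⟩ hb

end Topological

theorem exists_dual_of_notMem_conicCombinations [FiniteDimensional ℝ E] (v : ι → E) {b : E}
    (hb : b ∉ conicCombinations v) :
    ∃ f : Dual ℝ E, (∀ x ∈ conicCombinations v, 0 ≤ f x) ∧ f b < 0 := by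
  let e : E →ₗ[ℝ] Fin (finrank ℝ E) → ℝ := (finBasis ℝ E).equivFun
  have heb : e b ∉ conicCombinations (e ∘ v) := by
    rw [← map_conicCombinations]
    rintro ⟨x, hx, hxb⟩
    exact hb ((finBasis ℝ E).equivFun.injective hxb ▸ hx)
  obtain ⟨f, hf, hfb⟩ := exists_strongDual_of_notMem_conicCombinations (e ∘ v) heb
  refine ⟨f.toLinearMap ∘ₗ e, fun x hx => hf _ ?_, hfb⟩
  rw [← map_conicCombinations]
  exact ⟨x, hx, rfl⟩

theorem exists_nonneg_add_of_nonneg_on_ker {V F : Type*} [AddCommGroup V] [Module ℝ V]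
    [AddCommGroup F] [Module ℝ F] [FiniteDimensional ℝ F] (v : ι → V) (G : V →ₗ[ℝ] F)
    (u : Dual ℝ V) (hu : ∀ x ∈ conicCombinations v, G x = 0 → 0 ≤ u x) :
    ∃ φ : Dual ℝ F, ∀ x ∈ conicCombinations v, 0 ≤ u x + φ (G x) := by
  let Φ := u.prod G
  have hb : ((-1 : ℝ), (0 : F)) ∉ conicCombinations (Φ ∘ v) := by
    rw [← map_conicCombinations]
    rintro ⟨x, hx, hΦx⟩
    have hux : u x = -1 := congrArg Prod.fst hΦx
    linarith [hu x hx (congrArg Prod.snd hΦx)]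
  obtain ⟨f, hf, hfb⟩ := exists_dual_of_notMem_conicCombinations (Φ ∘ v) hb
  have hf_apply (a : ℝ) (y : F) : f (a, y) = a * f (1, 0) + f (0, y) := by
    rw [show (a, y) = a • ((1 : ℝ), (0 : F)) + (0, y) by simp, map_add, map_smul, smul_eq_mul]
  have hs : 0 < f (1, 0) := by
    have := hf_apply (-1) 0
    rw [Prod.mk_zero_zero, map_zero] at this
    linarith
  refine ⟨(f (1, 0))⁻¹ • f ∘ₗ LinearMap.inr ℝ ℝ F, fun x hx => ?_⟩
  have hfx : 0 ≤ f (u x, G x) := hf _ (by rw [← map_conicCombinations]; exact ⟨x, hx, rfl⟩)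
  rw [hf_apply] at hfx
  have : u x + (f (1, 0))⁻¹ * f (0, G x) = (f (1, 0))⁻¹ * (u x * f (1, 0) + f (0, G x)) := by
    field_simp
  simpa [this] using mul_nonneg (inv_nonneg.2 hs.le) hfx

open PointedCone in
theorem dual_inf_dualCoannihilator {V : Type*} [AddCommGroup V] [Module ℝ V]
    [FiniteDimensional ℝ V] (v : ι → V) (W : Submodule ℝ (Dual ℝ V)) :
    dual (Dual.eval ℝ V) ((conicCombinations v ⊓ W.dualCoannihilator : PointedCone ℝ V) : Set V)
      = dual (Dual.eval ℝ V) (conicCombinations v) ⊔ W := by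
  apply le_antisymm
  · intro u hu
    have hker (x : V) : W.dualCoannihilator.mkQ x = 0 ↔ x ∈ W.dualCoannihilator :=
      Submodule.Quotient.mk_eq_zero _
    obtain ⟨φ, hφ⟩ := exists_nonneg_add_of_nonneg_on_ker v W.dualCoannihilator.mkQ u
      fun x hx hGx => hu ⟨hx, (hker x).1 hGx⟩
    have hφW : W.dualCoannihilator.mkQ.dualMap φ ∈ W := by
      have h := W.dualCoannihilator.range_dualMap_mkQ_eq
      rw [Subspace.dualCoannihilator_dualAnnihilator_eq] at h
      exact h.le (LinearMap.mem_range_self _ φ)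
    refine Submodule.mem_sup.2 ⟨u + W.dualCoannihilator.mkQ.dualMap φ, fun x hx => hφ x hx,
      -W.dualCoannihilator.mkQ.dualMap φ, W.neg_mem hφW, add_neg_cancel_right _ _⟩
  · rw [sup_le_iff]
    constructor
    · exact dual_anti inf_le_left
    · intro w hw x hx
      have := (Submodule.mem_dualCoannihilator x).1 hx.2 w hw
      simp [this]

theorem forall_eq_zero_iff_mem_of_salient {V : Type*} [AddCommGroup V] [Module ℝ V] {S : Set V}
    {D : Set (Dual ℝ V)} {W : Submodule ℝ (Dual ℝ V)} (hSW : ∀ x ∈ S, ∀ w ∈ W, w x = 0)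
    (hdual : ∀ u : Dual ℝ V, (∀ x ∈ S, 0 ≤ u x) → ∃ p ∈ D, ∃ w ∈ W, u = p + w)
    (hD : ∀ y, y ∈ W.mkQ '' D → -y ∈ W.mkQ '' D → y = 0) (u : Dual ℝ V) :
    (∀ x ∈ S, u x = 0) ↔ u ∈ W := by
  refine ⟨fun hu => ?_, fun hu x hx => hSW x hx u hu⟩
  have hmkQ (u' : Dual ℝ V) (hu' : ∀ x ∈ S, 0 ≤ u' x) : W.mkQ u' ∈ W.mkQ '' D := by
    obtain ⟨p, hp, w, hw, rfl⟩ := hdual u' hu'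
    exact ⟨p, hp, by simp [(Submodule.Quotient.mk_eq_zero W).2 hw]⟩
  rw [← Submodule.Quotient.mk_eq_zero]
  exact hD _ (hmkQ u fun x hx => (hu x hx).ge)
    (by simpa using hmkQ (-u) fun x hx => by simp [hu x hx])

end

/-- For a polyhedral cone `ρ ⊆ V`, a subspace `W ⊆ V*`,
`ℓ := {x | w(x) = 0 ∀ w ∈ W}` and `σ₀ := ρ ∩ ℓ`, the dual cone of `σ₀` is `ρ^∨ + W`.
If moreover the image of `ρ^∨` in `V*/W` is a strictly convex cone, then `σ₀^⊥ = W`. -/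
theorem stmt_1 (V : Type*) [AddCommGroup V] [Module ℝ V] [FiniteDimensional ℝ V]
    (ρ : Set V) (hρ : IsPolyhedralCone ρ)
    (W : Submodule ℝ (Module.Dual ℝ V))
    (ℓ : Set V) (hℓ : ℓ = {x | ∀ w ∈ W, w x = 0})
    (σ₀ : Set V) (hσ₀ : σ₀ = ρ ∩ ℓ) :
    ({u : Module.Dual ℝ V | ∀ x ∈ σ₀, 0 ≤ u x}
      = {u : Module.Dual ℝ V | ∃ v ∈ {u' : Module.Dual ℝ V | ∀ x ∈ ρ, 0 ≤ u' x},
          ∃ w ∈ W, u = v + w}) ∧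
    ((∀ y : Module.Dual ℝ V ⧸ W,
        y ∈ W.mkQ '' {u' : Module.Dual ℝ V | ∀ x ∈ ρ, 0 ≤ u' x} →
        -y ∈ W.mkQ '' {u' : Module.Dual ℝ V | ∀ x ∈ ρ, 0 ≤ u' x} → y = 0) →
      {u : Module.Dual ℝ V | ∀ x ∈ σ₀, u x = 0} = (W : Set (Module.Dual ℝ V))) := by
  obtain ⟨n, v, hv⟩ := hρ
  replace hv : ρ = conicCombinations v := hv
  subst hv hℓ hσ₀
  have hdual (u : Dual ℝ V) :
      (∀ x ∈ (conicCombinations v : Set V) ∩ {x | ∀ w ∈ W, w x = 0}, 0 ≤ u x) ↔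
        ∃ p ∈ {u' : Dual ℝ V | ∀ x ∈ (conicCombinations v : Set V), 0 ≤ u' x},
          ∃ w ∈ W, u = p + w := by
    simpa [Submodule.mem_sup, eq_comm] using SetLike.ext_iff.1 (dual_inf_dualCoannihilator v W) u
  refine ⟨Set.ext hdual, fun hsalient => Set.ext fun u => ?_⟩
  exact forall_eq_zero_iff_mem_of_salient (fun x hx => hx.2) (fun u => (hdual u).1) hsalient u
end

section
/- Let M and M'' be finitely generated free ℤ-modules, φ : M → M'' a ℤ-linear map with real extension φ_ℝ : M_ℝ → M''_ℝ, and let ρ^∨ ⊆ M_ℝ be a rational polyhedral cone such that ρ^∨ ∩ M generates M as a group. Set Λ := φ(ρ^∨ ∩ M) and σ₀^∨ := φ_ℝ^{-1}(φ_ℝ(ρ^∨)). Then φ(σ₀^∨ ∩ M) = φ_ℝ(ρ^∨) ∩ φ(M), and this set equals the saturation ℝ_{≥0}Λ ∩ (Λ − Λ) of the monoid Λ, where ℝ_{≥0}Λ is the convex cone generated by Λ in M''_ℝ and Λ − Λ is the subgroup generated by Λ. -/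
/-!
Write `S` for the lattice points of `ρ^∨` and `Λ = φ(S)`. Since `ρ^∨` is spanned by finitely many
lattice points, it is also the cone spanned by all of `S`, so `φ_ℝ(ρ^∨)` is the cone `ℝ_{≥0}Λ`.
Since `S` generates `M`, the group `Λ − Λ` is all of `φ(M)`. Both equalities then reduce to
`φ_ℝ ∘ icast = icast ∘ φ` and the identity `f(f⁻¹ C) = C ∩ range f`.
-/

/-- The convex cone generated by a set: all finite nonnegative linear combinations. -/
def nonnegSpan {k : ℕ} (s : Set (Fin k → ℝ)) : Set (Fin k → ℝ) :=
  {x | ∃ (n : ℕ) (c : Fin n → ℝ) (v : Fin n → (Fin k → ℝ)),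
    (∀ i, 0 ≤ c i) ∧ (∀ i, v i ∈ s) ∧ x = ∑ i, c i • v i}

/-- The canonical embedding of the lattice `ℤ^k` in `ℝ^k`. -/
def icast {k : ℕ} (x : Fin k → ℤ) : Fin k → ℝ := fun i => (x i : ℝ)

open scoped NNReal

lemma nonnegSpan_eq_span {k : ℕ} (s : Set (Fin k → ℝ)) :
    nonnegSpan s = (Submodule.span ℝ≥0 s : Set (Fin k → ℝ)) := by
  ext x
  simp only [SetLike.mem_coe, Submodule.mem_span_set']
  constructor
  · rintro ⟨n, c, v, hc, hv, rfl⟩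
    exact ⟨n, fun i => ⟨c i, hc i⟩, fun i => ⟨v i, hv i⟩, rfl⟩
  · rintro ⟨n, c, v, rfl⟩
    exact ⟨n, fun i => c i, fun i => v i, fun i => (c i).2, fun i => (v i).2,
      by simp [NNReal.smul_def]⟩

lemma subset_nonnegSpan {k : ℕ} (s : Set (Fin k → ℝ)) : s ⊆ nonnegSpan s := by
  rw [nonnegSpan_eq_span]
  exact Submodule.subset_span

lemma nonnegSpan_eq_of_subset_of_subset {k : ℕ} {s t : Set (Fin k → ℝ)} (hst : s ⊆ t)
    (ht : t ⊆ nonnegSpan s) : nonnegSpan t = nonnegSpan s := by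
  simp only [nonnegSpan_eq_span] at ht ⊢
  exact congrArg _ (le_antisymm (Submodule.span_le.mpr ht) (Submodule.span_mono hst))

lemma image_nonnegSpan {m k : ℕ} (f : (Fin m → ℝ) →ₗ[ℝ] (Fin k → ℝ)) (s : Set (Fin m → ℝ)) :
    f '' nonnegSpan s = nonnegSpan (f '' s) := by
  rw [nonnegSpan_eq_span, nonnegSpan_eq_span]
  exact (Submodule.map_coe (f.restrictScalars ℝ≥0) _).symm.trans
    (congrArg _ (Submodule.span_image (f.restrictScalars ℝ≥0)).symm)

lemma nonnegSpan_image_preimage_of_eq {α : Type*} {m : ℕ} {i : α → Fin m → ℝ}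
    {ρ : Set (Fin m → ℝ)} {s : Set α} (hρ : ρ = nonnegSpan (i '' s)) :
    nonnegSpan (i '' (i ⁻¹' ρ)) = ρ := by
  have hsρ : i '' s ⊆ ρ := hρ ▸ subset_nonnegSpan _
  rw [hρ] at hsρ ⊢
  exact nonnegSpan_eq_of_subset_of_subset
    (Set.image_mono (Set.image_subset_iff.mp hsρ)) (Set.image_preimage_subset _ _)

lemma coe_addSubgroupClosure_image_eq_range {M N : Type*} [AddCommGroup M] [AddCommGroup N]
    (f : M →ₗ[ℤ] N) {S : Set M} (hS : Submodule.span ℤ S = ⊤) :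
    (AddSubgroup.closure (f '' S) : Set N) = Set.range f := by
  rw [← Submodule.span_int_eq_addSubgroupClosure, ← Submodule.map_span, hS, Submodule.map_top]
  exact LinearMap.coe_range f

lemma image_image_preimage_preimage {α α' β β' : Type*} {i : α → α'} {j : β → β'} {f : α → β}
    {F : α' → β'} (h : F ∘ i = j ∘ f) (C : Set β') :
    j '' (f '' (i ⁻¹' (F ⁻¹' C))) = C ∩ j '' Set.range f := by
  rw [Set.image_image, ← Set.preimage_comp, h, ← Set.range_comp]
  exact Set.image_preimage_eq_inter_range

/-- For a ℤ-linear `φ : M → M''` with real extension `φ_ℝ`, and a rational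
polyhedral cone `ρ^∨` whose lattice points generate `M`, setting `Λ := φ(ρ^∨ ∩ M)` and
`σ₀^∨ := φ_ℝ⁻¹(φ_ℝ(ρ^∨))`, one has `φ(σ₀^∨ ∩ M) = φ_ℝ(ρ^∨) ∩ φ(M)`, and this set is the
saturation `ℝ_{≥0}Λ ∩ (Λ − Λ)` of the monoid `Λ`. -/
theorem stmt_2 (m k : ℕ)
    (φ : (Fin m → ℤ) →ₗ[ℤ] (Fin k → ℤ))
    (φR : (Fin m → ℝ) →ₗ[ℝ] (Fin k → ℝ))
    (hcomp : ∀ x : Fin m → ℤ, φR (icast x) = icast (φ x))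
    (ρ : Set (Fin m → ℝ))
    (hρ : ∃ s : Finset (Fin m → ℤ), ρ = nonnegSpan (icast '' (s : Set (Fin m → ℤ))))
    (hgen : Submodule.span ℤ {x : Fin m → ℤ | icast x ∈ ρ} = ⊤) :
    (icast '' (⇑φ '' {x : Fin m → ℤ | icast x ∈ ⇑φR ⁻¹' (⇑φR '' ρ)})
       = (⇑φR '' ρ) ∩ (icast '' Set.range ⇑φ)) ∧
    ((⇑φR '' ρ) ∩ (icast '' Set.range ⇑φ)
       = nonnegSpan (icast '' (⇑φ '' {x : Fin m → ℤ | icast x ∈ ρ}))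
         ∩ icast '' (AddSubgroup.closure (⇑φ '' {x : Fin m → ℤ | icast x ∈ ρ})
             : Set (Fin k → ℤ))) := by
  obtain ⟨s, hs⟩ := hρ
  have hcone : φR '' ρ = nonnegSpan (icast '' (φ '' {x | icast x ∈ ρ})) := by
    conv_lhs => rw [← nonnegSpan_image_preimage_of_eq hs]
    rw [image_nonnegSpan, Set.image_image, Set.image_image]
    simp only [hcomp]
    rfl
  refine ⟨image_image_preimage_preimage (funext hcomp) _, ?_⟩
  rw [hcone, coe_addSubgroupClosure_image_eq_range φ hgen]
end

section
/- Let d ≥ 1 and let ζ_1, …, ζ_k ∈ ℂ[[X_1,…,X_d]] be pairwise distinct formal power series such that for all s ≠ t one has ζ_s − ζ_t = X^{λ_{st}}·H_{st} for some λ_{st} ∈ ℕ^d and some unit H_{st} of ℂ[[X_1,…,X_d]]. Then for every fixed index s₀, the set {λ_{s₀t} : t ≠ s₀} is totally ordered by the componentwise partial order on ℕ^d. -/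
/-!
Write `ζ s₀ - ζ t = X^a u` and `ζ s₀ - ζ t' = X^b v`. Their difference `ζ t' - ζ t` is again of
the form `X^c w` with `w(0) ≠ 0`. If `a` and `b` were incomparable, the coefficient of
`X^a u - X^b v` at `a` would be `u(0) ≠ 0`, forcing `c ≤ a`; likewise `c ≤ b`. Then neither
`a ≤ c` nor `b ≤ c`, so the coefficient at `c` vanishes on the left but equals `w(0)` on the right.
-/

namespace MvPowerSeries

variable {σ R : Type*}

section Semiring

variable [Semiring R] {m n : σ →₀ ℕ} {φ : MvPowerSeries σ R}

theorem coeff_monomial_one_mul_of_not_le (h : ¬n ≤ m) : coeff m (monomial n 1 * φ) = 0 := by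
  simp [coeff_monomial_mul, h]

theorem coeff_monomial_one_mul_self : coeff n (monomial n 1 * φ) = constantCoeff φ := by
  simp [coeff_monomial_mul]

end Semiring

theorem le_total_of_monomial_one_mul_sub_eq [Ring R] {a b c : σ →₀ ℕ}
    {u v w : MvPowerSeries σ R} (hu : constantCoeff u ≠ 0) (hv : constantCoeff v ≠ 0)
    (hw : constantCoeff w ≠ 0)
    (h : monomial a 1 * u - monomial b 1 * v = monomial c 1 * w) :
    a ≤ b ∨ b ≤ a := by
  by_contra! ⟨hab, hba⟩
  have hca : c ≤ a := by
    by_contra hca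
    have := congrArg (coeff a) h
    rw [map_sub, coeff_monomial_one_mul_self, coeff_monomial_one_mul_of_not_le hba,
      coeff_monomial_one_mul_of_not_le hca, sub_zero] at this
    exact hu this
  have hcb : c ≤ b := by
    by_contra hcb
    have := congrArg (coeff b) h
    rw [map_sub, coeff_monomial_one_mul_self, coeff_monomial_one_mul_of_not_le hab,
      coeff_monomial_one_mul_of_not_le hcb, zero_sub, neg_eq_zero] at this
    exact hv this
  have := congrArg (coeff c) h
  rw [map_sub, coeff_monomial_one_mul_of_not_le fun hac => hab (hac.trans hcb),
    coeff_monomial_one_mul_of_not_le fun hbc => hba (hbc.trans hca), sub_zero,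
    coeff_monomial_one_mul_self] at this
  exact hw this.symm

end MvPowerSeries

theorem stmt_3_general (d k : ℕ)
    (ζ : Fin k → MvPowerSeries (Fin d) ℂ)
    (lam : Fin k → Fin k → (Fin d →₀ ℕ))
    (H : Fin k → Fin k → MvPowerSeries (Fin d) ℂ)
    (hH : ∀ s t, s ≠ t → IsUnit (H s t))
    (hfac : ∀ s t, s ≠ t →
      ζ s - ζ t = MvPowerSeries.monomial (lam s t) 1 * H s t)
    (s₀ : Fin k) :
    ∀ t t', t ≠ s₀ → t' ≠ s₀ → lam s₀ t ≤ lam s₀ t' ∨ lam s₀ t' ≤ lam s₀ t := by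
  intro t t' ht ht'
  obtain rfl | htt' := eq_or_ne t t'
  · exact Or.inl le_rfl
  have constantCoeff_ne_zero : ∀ s t, s ≠ t → MvPowerSeries.constantCoeff (H s t) ≠ 0 :=
    fun s t hst => ((hH s t hst).map MvPowerSeries.constantCoeff).ne_zero
  refine MvPowerSeries.le_total_of_monomial_one_mul_sub_eq (c := lam t' t)
    (constantCoeff_ne_zero _ _ ht.symm) (constantCoeff_ne_zero _ _ ht'.symm)
    (constantCoeff_ne_zero _ _ htt'.symm) ?_
  rw [← hfac _ _ ht.symm, ← hfac _ _ ht'.symm, ← hfac _ _ htt'.symm]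
  abel

/-- If pairwise distinct power series `ζ s` have pairwise differences of the
form `X^(λ s t) · (unit)`, then for every fixed `s₀` the set `{λ s₀ t : t ≠ s₀}` is totally
ordered by the componentwise order on `ℕ^d`. -/
theorem stmt_3 (d k : ℕ) (hd : 1 ≤ d)
    (ζ : Fin k → MvPowerSeries (Fin d) ℂ) (hinj : Function.Injective ζ)
    (lam : Fin k → Fin k → (Fin d →₀ ℕ))
    (H : Fin k → Fin k → MvPowerSeries (Fin d) ℂ)
    (hH : ∀ s t, s ≠ t → IsUnit (H s t))
    (hfac : ∀ s t, s ≠ t →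
      ζ s - ζ t = MvPowerSeries.monomial (lam s t) 1 * H s t)
    (s₀ : Fin k) :
    ∀ t t', t ≠ s₀ → t' ≠ s₀ → lam s₀ t ≤ lam s₀ t' ∨ lam s₀ t' ≤ lam s₀ t :=
  stmt_3_general d k ζ lam H hH hfac s₀
end

section
/- Let d ≥ 1 and let ζ_1, ζ_2, ζ_3 ∈ ℂ[[X_1,…,X_d]] be pairwise distinct formal power series with ζ_i − ζ_j = X^{λ_{ij}}·H_{ij} for some λ_{ij} ∈ ℕ^d and units H_{ij} of ℂ[[X_1,…,X_d]] (for each pair i ≠ j). Then λ_{12} and λ_{23} are comparable in the componentwise order, λ_{13} ≥ min{λ_{12}, λ_{23}}, and if λ_{12} ≠ λ_{23} then λ_{13} = min{λ_{12}, λ_{23}}. -/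
/-!
Write `A = X^λ₁₂ H₁₂`, `B = X^λ₂₃ H₂₃`, `C = X^λ₁₃ H₁₃`, so that `C = A + B`. When the constant
coefficient of `H` is nonzero, `λ` is the least element of the support of `X^λ H`. Comparing
coefficients of `C = A + B`: at `λ₁₃` one of `A`, `B` is nonzero, so `λ₁₂ ≤ λ₁₃` or `λ₂₃ ≤ λ₁₃`;
at `λ₁₂` with `λ₂₃ ≰ λ₁₂` only `A` contributes, so `λ₁₃ ≤ λ₁₂` (and symmetrically). These three
facts force all three claims by order bookkeeping.
-/

namespace MvPowerSeries

variable {σ R : Type*} [Semiring R]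

theorem coeff_monomial_one_mul_self_s4 (l : σ →₀ ℕ) (H : MvPowerSeries σ R) :
    coeff l (monomial l 1 * H) = constantCoeff H := by
  rw [coeff_monomial_mul, if_pos le_rfl, one_mul, tsub_self, coeff_zero_eq_constantCoeff_apply]

theorem le_of_coeff_monomial_one_mul_ne_zero {l e : σ →₀ ℕ} {H : MvPowerSeries σ R}
    (h : coeff e (monomial l 1 * H) ≠ 0) : l ≤ e := by
  contrapose! h
  rw [coeff_monomial_mul, if_neg h]

section MonomialTimesUnitSum

variable {a b c : σ →₀ ℕ} {A B C : MvPowerSeries σ R}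

theorem le_or_le_of_monomial_mul_eq_add (hC : constantCoeff C ≠ 0)
    (h : monomial c 1 * C = monomial a 1 * A + monomial b 1 * B) : a ≤ c ∨ b ≤ c := by
  have hc : coeff c (monomial a 1 * A) + coeff c (monomial b 1 * B) ≠ 0 := by
    rwa [← map_add, ← h, coeff_monomial_one_mul_self_s4]
  by_cases ha : coeff c (monomial a 1 * A) = 0
  · rw [ha, zero_add] at hc
    exact Or.inr (le_of_coeff_monomial_one_mul_ne_zero hc)
  · exact Or.inl (le_of_coeff_monomial_one_mul_ne_zero ha)

theorem le_of_monomial_mul_eq_add_of_not_le (hA : constantCoeff A ≠ 0)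
    (h : monomial c 1 * C = monomial a 1 * A + monomial b 1 * B) (hba : ¬b ≤ a) : c ≤ a := by
  have hB : coeff a (monomial b 1 * B) = 0 := by
    contrapose! hba
    exact le_of_coeff_monomial_one_mul_ne_zero hba
  apply le_of_coeff_monomial_one_mul_ne_zero (H := C)
  rwa [h, map_add, hB, add_zero, coeff_monomial_one_mul_self_s4]

end MonomialTimesUnitSum

end MvPowerSeries

open MvPowerSeries

theorem stmt_4_general (d : ℕ)
    (ζ₁ ζ₂ ζ₃ : MvPowerSeries (Fin d) ℂ)
    (l12 l13 l23 : Fin d →₀ ℕ)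
    (H12 H13 H23 : MvPowerSeries (Fin d) ℂ)
    (hu12 : IsUnit H12) (hu13 : IsUnit H13) (hu23 : IsUnit H23)
    (e12 : ζ₁ - ζ₂ = MvPowerSeries.monomial l12 1 * H12)
    (e13 : ζ₁ - ζ₃ = MvPowerSeries.monomial l13 1 * H13)
    (e23 : ζ₂ - ζ₃ = MvPowerSeries.monomial l23 1 * H23) :
    (l12 ≤ l23 ∨ l23 ≤ l12) ∧
    ((l12 ≤ l23 → l12 ≤ l13) ∧ (l23 ≤ l12 → l23 ≤ l13)) ∧
    (l12 ≠ l23 → ((l12 ≤ l23 → l13 = l12) ∧ (l23 ≤ l12 → l13 = l23))) := by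
  have c12 := (isUnit_iff_constantCoeff.mp hu12).ne_zero
  have c13 := (isUnit_iff_constantCoeff.mp hu13).ne_zero
  have c23 := (isUnit_iff_constantCoeff.mp hu23).ne_zero
  have hsum : monomial l13 1 * H13 = monomial l12 1 * H12 + monomial l23 1 * H23 := by
    rw [← e12, ← e23, ← e13]; ring
  have hsum_comm : monomial l13 1 * H13 = monomial l23 1 * H23 + monomial l12 1 * H12 := by
    rw [hsum, add_comm]
  have hlow := le_or_le_of_monomial_mul_eq_add c13 hsum
  have hup12 := le_of_monomial_mul_eq_add_of_not_le c12 hsum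
  have hup23 := le_of_monomial_mul_eq_add_of_not_le c23 hsum_comm
  have comparable : l12 ≤ l23 ∨ l23 ≤ l12 := by
    by_contra! hinc
    rcases hlow with h | h
    · exact hinc.1 (h.trans (hup23 hinc.1))
    · exact hinc.2 (h.trans (hup12 hinc.2))
  have lb12 : l12 ≤ l23 → l12 ≤ l13 := fun hle => hlow.elim id hle.trans
  have lb23 : l23 ≤ l12 → l23 ≤ l13 := fun hle => hlow.elim hle.trans id
  refine ⟨comparable, ⟨lb12, lb23⟩, fun hne => ⟨fun hle => ?_, fun hle => ?_⟩⟩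
  · exact (hup12 fun h => hne (le_antisymm hle h)).antisymm (lb12 hle)
  · exact (hup23 fun h => hne (le_antisymm h hle)).antisymm (lb23 hle)

/-- For three pairwise distinct power series whose pairwise differences are
monomials times units, `λ₁₂` and `λ₂₃` are comparable, `λ₁₃ ≥ min{λ₁₂, λ₂₃}`, and if
`λ₁₂ ≠ λ₂₃` then `λ₁₃ = min{λ₁₂, λ₂₃}` (componentwise order on `ℕ^d`). -/
theorem stmt_4 (d : ℕ) (hd : 1 ≤ d)
    (ζ₁ ζ₂ ζ₃ : MvPowerSeries (Fin d) ℂ)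
    (h12 : ζ₁ ≠ ζ₂) (h13 : ζ₁ ≠ ζ₃) (h23 : ζ₂ ≠ ζ₃)
    (l12 l13 l23 : Fin d →₀ ℕ)
    (H12 H13 H23 : MvPowerSeries (Fin d) ℂ)
    (hu12 : IsUnit H12) (hu13 : IsUnit H13) (hu23 : IsUnit H23)
    (e12 : ζ₁ - ζ₂ = MvPowerSeries.monomial l12 1 * H12)
    (e13 : ζ₁ - ζ₃ = MvPowerSeries.monomial l13 1 * H13)
    (e23 : ζ₂ - ζ₃ = MvPowerSeries.monomial l23 1 * H23) :
    (l12 ≤ l23 ∨ l23 ≤ l12) ∧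
    ((l12 ≤ l23 → l12 ≤ l13) ∧ (l23 ≤ l12 → l23 ≤ l13)) ∧
    (l12 ≠ l23 → ((l12 ≤ l23 → l13 = l12) ∧ (l23 ≤ l12 → l13 = l23))) :=
  stmt_4_general d ζ₁ ζ₂ ζ₃ l12 l13 l23 H12 H13 H23 hu12 hu13 hu23 e12 e13 e23
end

section
/- Let M = ℤ^d with dual lattice N, and let ρ ⊂ N_ℝ be a rational polyhedral cone of dimension d whose dual cone ρ^∨ ⊂ M_ℝ is strictly convex of dimension d. Let n ≥ 1, let λ ∈ ρ^∨ ∩ (1/n)M, set M_λ := M + ℤλ and n_λ := [M_λ : M]. Let M' := M ⊕ ℤy, pair N'_ℝ := N_ℝ × ℝ with M'_ℝ by ⟨(a,t), u + sy⟩ := ⟨a,u⟩ + ts, and let σ := {(a, ⟨a,λ⟩) : a ∈ ρ} ⊂ N'_ℝ. Let φ : M' → M_λ be the homomorphism u + sy ↦ u + sλ. Then: (i) φ is surjective with kernel ℤ·n_λ(y − λ), and this kernel equals σ^⊥ ∩ M' where σ^⊥ := {m ∈ M'_ℝ : ⟨x, m⟩ = 0 for all x ∈ σ}; in particular φ induces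 a group isomorphism M'/(σ^⊥ ∩ M') ≅ M_λ. (ii) With σ^∨ the dual cone of σ in M'_ℝ, one has σ^∨ ∩ M' = φ^{-1}(ρ^∨ ∩ M_λ), and any group-theoretic splitting of φ induces an additive monoid isomorphism σ^∨ ∩ M' ≅ (ℤ·n_λ(y − λ)) × (ρ^∨ ∩ M_λ) ≅ ℤ × (ρ^∨ ∩ M_λ). -/
open Finset

def icastR {k : ℕ} (x : Fin k → ℤ) : Fin k → ℝ := fun i => (x i : ℝ)
def qcastR {k : ℕ} (x : Fin k → ℚ) : Fin k → ℝ := fun i => (x i : ℝ)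

/-- The dual cone with respect to the standard pairing on `ℝ^d`. -/
def dualSet {d : ℕ} (ρ : Set (Fin d → ℝ)) : Set (Fin d → ℝ) :=
  {u | ∀ a ∈ ρ, 0 ≤ ∑ i, a i * u i}

/-- The lattice `ℤ^d` inside `ℚ^d`. -/
def intCastHomQ (d : ℕ) : (Fin d → ℤ) →+ (Fin d → ℚ) where
  toFun x := fun i => (x i : ℚ)
  map_zero' := by funext i; simp
  map_add' x y := by funext i; simp

/-- The homomorphism `φ : M' = M ⊕ ℤy → M_λ ⊆ ℚ^d`, `(u, s) ↦ u + sλ`. -/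
def phiHom (d : ℕ) (lq : Fin d → ℚ) : ((Fin d → ℤ) × ℤ) →+ (Fin d → ℚ) where
  toFun p := fun i => (p.1 i : ℚ) + p.2 * lq i
  map_zero' := by funext i; simp
  map_add' p q := by funext i; simp only [Prod.fst_add, Prod.snd_add, Pi.add_apply, Int.cast_add]; ring

/-! The kernel of `φ (u, s) = u + sλ` consists of the `(u, s)` with `sλ ∈ M`, i.e. with `s` a
multiple of the order of `λ` in `ℚ^d ⧸ M`; this order is `n_λ`, because `M_λ ⧸ M` is the cyclic
group generated by `λ mod M`. So `ker φ` is generated by `n_λ (y - λ)`. Since `σ` is the graph of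
`⟨·, λ⟩` over `ρ`, pairing `(u, s)` with `(a, ⟨a, λ⟩)` gives `⟨a, φ (u, s)⟩`: this identifies
`σ^∨ ∩ M'` with `φ⁻¹ ρ^∨`, and, as `ρ` spans, `σ^⊥ ∩ M'` with `ker φ`. Finally `M_λ` is free, so
`φ` has a section; the induced retraction `M' → ker φ ≅ ℤ`, paired with `φ`, is injective and maps
`φ⁻¹ T` onto `ℤ × (T ∩ M_λ)` for every `T`. -/

namespace AddSubgroup

variable {G : Type*} [AddCommGroup G]

theorem zsmul_mem_iff_addOrderOf_dvd (H : AddSubgroup G) (x : G) (s : ℤ) :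
    s • x ∈ H ↔ (addOrderOf (x : G ⧸ H) : ℤ) ∣ s := by
  rw [addOrderOf_dvd_iff_zsmul_eq_zero, ← QuotientAddGroup.mk_zsmul, QuotientAddGroup.eq_zero_iff]

theorem relIndex_sup_zmultiples (H : AddSubgroup G) (x : G) :
    H.relIndex (H ⊔ zmultiples x) = addOrderOf (x : G ⧸ H) := by
  rw [relIndex_sup_left, ← QuotientAddGroup.ker_mk' H, relIndex_ker, AddMonoidHom.map_zmultiples,
    Nat.card_zmultiples, QuotientAddGroup.ker_mk']
  rfl

end AddSubgroup

open AddSubgroup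

namespace AddMonoidHom

section CoprodZMultiples

variable {A G : Type*} [AddCommGroup A] [AddCommGroup G] (ι : A →+ G) (x : G)

theorem range_coprod_zmultiplesHom :
    (ι.coprod (zmultiplesHom G x)).range = ι.range ⊔ zmultiples x := by
  apply le_antisymm
  · rintro _ ⟨⟨a, s⟩, rfl⟩
    exact add_mem (mem_sup_left ⟨a, rfl⟩) (mem_sup_right ⟨s, rfl⟩)
  · refine sup_le ?_ ?_
    · rintro _ ⟨a, rfl⟩
      exact ⟨(a, 0), by simp⟩
    · rintro _ ⟨s, rfl⟩
      exact ⟨(0, s), by simp⟩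

theorem ker_coprod_zmultiplesHom (hι : Function.Injective ι) {a : A}
    (ha : ι a = (addOrderOf (x : G ⧸ ι.range) : ℤ) • x) :
    (ι.coprod (zmultiplesHom G x)).ker
      = zmultiples (-a, (addOrderOf (x : G ⧸ ι.range) : ℤ)) := by
  ext ⟨b, s⟩
  simp only [mem_ker, coprod_apply, zmultiplesHom_apply, mem_zmultiples_iff, Prod.smul_mk,
    Prod.mk.injEq]
  constructor
  · intro h
    have hb : ι b = -(s • x) := eq_neg_of_add_eq_zero_left h
    obtain ⟨z, rfl⟩ := (zsmul_mem_iff_addOrderOf_dvd ι.range x s).mp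
      ⟨-b, by rw [map_neg, hb, neg_neg]⟩
    refine ⟨z, hι ?_, by rw [smul_eq_mul, mul_comm]⟩
    rw [map_zsmul, map_neg, ha, hb, smul_neg, smul_smul, mul_comm]
  · rintro ⟨z, rfl, rfl⟩
    rw [map_zsmul, map_neg, ha, smul_neg, smul_smul, smul_eq_mul, mul_comm, neg_add_cancel]

end CoprodZMultiples

section Splitting

variable {G H : Type*} [AddCommGroup G] [AddCommGroup H] {f : G →+ H} {k : G}

theorem exists_apply_eq_one_of_ker_eq_zmultiples [Module.Projective ℤ H]
    (hf : Function.Surjective f) (hker : f.ker = zmultiples k) (hk : ¬IsOfFinAddOrder k) :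
    ∃ c : G →+ ℤ, c k = 1 := by
  obtain ⟨s, hs⟩ := Module.projective_lifting_property f.toIntLinearMap LinearMap.id hf
  have hsf : ∀ y, f (s y) = y := fun y => LinearMap.congr_fun hs y
  let r : G →+ G := AddMonoidHom.id G - s.toAddMonoidHom.comp f
  have hr : ∀ p, r p ∈ (zmultiplesHom G k).range := by
    intro p
    rw [range_zmultiplesHom, ← hker, mem_ker]
    simp [r, hsf]
  have hinj : Function.Injective (zmultiplesHom G k) :=
    injective_zsmul_iff_not_isOfFinAddOrder.mpr hk
  refine ⟨(ofInjective hinj).symm.toAddMonoidHom.comp (r.codRestrict _ hr), ?_⟩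
  have hfk : f k = 0 := by rw [← mem_ker, hker]; exact mem_zmultiples k
  rw [coe_comp, AddEquiv.coe_toAddMonoidHom, Function.comp_apply, AddEquiv.symm_apply_eq,
    Subtype.ext_iff, codRestrict_apply, ofInjective_apply]
  simp [r, hfk]

variable {c : G →+ ℤ}

theorem injective_prod_of_ker_le_zmultiples (hker : f.ker ≤ zmultiples k) (hc : c k = 1) :
    Function.Injective (c.prod f) := by
  rw [injective_iff_map_eq_zero]
  intro p hp
  obtain ⟨z, rfl⟩ := mem_zmultiples_iff.mp (hker (mem_ker.mpr (congrArg Prod.snd hp)))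
  have : z • c k = 0 := by simpa using congrArg Prod.fst hp
  rw [hc, smul_eq_mul, mul_one] at this
  rw [this, zero_smul]

theorem image_prod_preimage (hk : f k = 0) (hc : c k = 1) (T : Set H) :
    c.prod f '' (f ⁻¹' T) = Set.univ ×ˢ ((f.range : Set H) ∩ T) := by
  ext ⟨z, y⟩
  simp only [Set.mem_image, Set.mem_preimage, Set.mem_prod, Set.mem_univ, true_and,
    Set.mem_inter_iff, SetLike.mem_coe, mem_range, prod_apply, Prod.mk.injEq]
  constructor
  · rintro ⟨p, hp, rfl, rfl⟩
    exact ⟨⟨p, rfl⟩, hp⟩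
  · rintro ⟨⟨p, rfl⟩, hp⟩
    refine ⟨p + (z - c p) • k, ?_, ?_, ?_⟩ <;> simp [hk, hc, hp]

theorem exists_injective_image_preimage_eq [Module.Projective ℤ f.range]
    (hker : f.ker = zmultiples k) (hk : ¬IsOfFinAddOrder k) :
    ∃ Φ : G →+ ℤ × H, Function.Injective Φ ∧
      ∀ T : Set H, Φ '' (f ⁻¹' T) = Set.univ ×ˢ ((f.range : Set H) ∩ T) := by
  obtain ⟨c, hc⟩ := exists_apply_eq_one_of_ker_eq_zmultiples f.rangeRestrict_surjective
    (by rw [ker_rangeRestrict, hker]) hk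
  have hfk : f k = 0 := by rw [← mem_ker, hker]; exact mem_zmultiples k
  exact ⟨c.prod f, injective_prod_of_ker_le_zmultiples hker.le hc, image_prod_preimage hfk hc⟩

end Splitting

end AddMonoidHom

open AddMonoidHom

theorem intCastHomQ_injective (d : ℕ) : Function.Injective (intCastHomQ d) :=
  fun _ _ h => funext fun i => Int.cast_injective (congrFun h i)

theorem addOrderOf_mk_ne_zero {d n : ℕ} (hn : 1 ≤ n) {lq : Fin d → ℚ}
    (hlq_n : ∀ i, ∃ z : ℤ, lq i = (z : ℚ) / n) :
    addOrderOf (lq : (Fin d → ℚ) ⧸ (intCastHomQ d).range) ≠ 0 := by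
  refine (IsOfFinAddOrder.addOrderOf_pos ?_).ne'
  refine isOfFinAddOrder_iff_nsmul_eq_zero.mpr ⟨n, hn, ?_⟩
  rw [← QuotientAddGroup.mk_nsmul, QuotientAddGroup.eq_zero_iff]
  choose z hz using hlq_n
  refine ⟨z, funext fun i => ?_⟩
  simp [intCastHomQ, hz i]
  field_simp

theorem phiHom_eq_coprod (d : ℕ) (lq : Fin d → ℚ) :
    phiHom d lq = (intCastHomQ d).coprod (zmultiplesHom _ lq) := by
  ext p i
  simp [phiHom, intCastHomQ, zsmul_eq_mul]

theorem qcastR_eq_zero_iff {d : ℕ} {y : Fin d → ℚ} : qcastR y = 0 ↔ y = 0 := by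
  simp [qcastR, funext_iff]

theorem eq_zero_of_forall_dotProduct_eq_zero {d : ℕ} {ρ : Set (Fin d → ℝ)}
    (hρ : Submodule.span ℝ ρ = ⊤) {u : Fin d → ℝ} (hu : ∀ a ∈ ρ, a ⬝ᵥ u = 0) : u = 0 := by
  have hspan : ∀ a ∈ Submodule.span ℝ ρ, a ⬝ᵥ u = 0 := fun a ha =>
    Submodule.span_induction hu (zero_dotProduct u)
      (fun _ _ _ _ h₁ h₂ => by rw [add_dotProduct, h₁, h₂, add_zero])
      (fun t _ _ h => by rw [smul_dotProduct, h, smul_zero]) ha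
  refine dotProduct_eq_zero_iff.mp fun a => ?_
  rw [dotProduct_comm]
  exact hspan a (hρ ▸ Submodule.mem_top)

section Graph

variable {d : ℕ} (lq : Fin d → ℚ)

theorem dotProduct_qcastR_phiHom (a : Fin d → ℝ) (p : (Fin d → ℤ) × ℤ) :
    a ⬝ᵥ qcastR (phiHom d lq p)
      = (∑ i, a i * (p.1 i : ℝ)) + (∑ i, a i * (lq i : ℝ)) * (p.2 : ℝ) := by
  simp only [dotProduct, qcastR, phiHom, AddMonoidHom.coe_mk, ZeroHom.coe_mk, Rat.cast_add,
    Rat.cast_mul, Rat.cast_intCast, sum_mul, ← sum_add_distrib]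
  exact sum_congr rfl fun i _ => by ring

theorem forall_mem_graph_iff (ρ : Set (Fin d → ℝ)) (p : (Fin d → ℤ) × ℤ) (P : ℝ → Prop) :
    (∀ x ∈ {x : (Fin d → ℝ) × ℝ | x.1 ∈ ρ ∧ x.2 = ∑ i, x.1 i * (lq i : ℝ)},
        P ((∑ i, x.1 i * (p.1 i : ℝ)) + x.2 * (p.2 : ℝ)))
      ↔ ∀ a ∈ ρ, P (a ⬝ᵥ qcastR (phiHom d lq p)) := by
  simp only [Set.mem_ofPred_eq, and_imp, Prod.forall, dotProduct_qcastR_phiHom]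
  exact ⟨fun h a ha => h a _ ha rfl, fun h a t ha ht => ht ▸ h a ha⟩

theorem dual_graph_eq_preimage_phiHom (ρ : Set (Fin d → ℝ)) :
    {p : (Fin d → ℤ) × ℤ | ∀ x ∈ {x : (Fin d → ℝ) × ℝ | x.1 ∈ ρ ∧ x.2 = ∑ i, x.1 i * (lq i : ℝ)},
      0 ≤ (∑ i, x.1 i * (p.1 i : ℝ)) + x.2 * (p.2 : ℝ)}
        = {p : (Fin d → ℤ) × ℤ | qcastR (phiHom d lq p) ∈ dualSet ρ} :=
  Set.ext fun p => forall_mem_graph_iff lq ρ p (0 ≤ ·)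

theorem coe_ker_phiHom_eq_perp_graph {ρ : Set (Fin d → ℝ)} (hρ : Submodule.span ℝ ρ = ⊤) :
    ((phiHom d lq).ker : Set ((Fin d → ℤ) × ℤ))
      = {p | ∀ x ∈ {x : (Fin d → ℝ) × ℝ | x.1 ∈ ρ ∧ x.2 = ∑ i, x.1 i * (lq i : ℝ)},
          (∑ i, x.1 i * (p.1 i : ℝ)) + x.2 * (p.2 : ℝ) = 0} := by
  ext p
  rw [SetLike.mem_coe, mem_ker, ← qcastR_eq_zero_iff, Set.mem_ofPred_eq,
    forall_mem_graph_iff lq ρ p (· = 0)]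
  exact ⟨fun h a _ => by rw [h, dotProduct_zero], eq_zero_of_forall_dotProduct_eq_zero hρ⟩

end Graph

theorem stmt_5_general (d : ℕ) (n : ℕ) (hn : 1 ≤ n)
    (ρ : Set (Fin d → ℝ))
    (hρdim : Submodule.span ℝ ρ = ⊤)
    (lq : Fin d → ℚ)
    (hlq_n : ∀ i, ∃ z : ℤ, lq i = (z : ℚ) / n)
    (Mlam : AddSubgroup (Fin d → ℚ))
    (hMlam : Mlam = (intCastHomQ d).range ⊔ AddSubgroup.closure {lq})
    (nlam : ℕ)
    (hnlam : nlam = ((intCastHomQ d).range.relIndex Mlam))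
    (σ : Set ((Fin d → ℝ) × ℝ))
    (hσ : σ = {p | p.1 ∈ ρ ∧ p.2 = ∑ i, p.1 i * (lq i : ℝ)}) :
    -- (i) φ is surjective onto M_λ
    ((phiHom d lq).range = Mlam) ∧
    -- the kernel of φ is ℤ·n_λ(y − λ) …
    (∃ μ : Fin d → ℤ, (∀ i, (μ i : ℚ) = (nlam : ℚ) * lq i) ∧
      ((phiHom d lq).ker : Set ((Fin d → ℤ) × ℤ))
        = {p | ∃ z : ℤ, p = z • ((-μ, (nlam : ℤ)) : (Fin d → ℤ) × ℤ)}) ∧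
    -- … and it equals σ^⊥ ∩ M'
    (((phiHom d lq).ker : Set ((Fin d → ℤ) × ℤ))
      = {p | ∀ x ∈ σ, (∑ i, x.1 i * (p.1 i : ℝ)) + x.2 * (p.2 : ℝ) = 0}) ∧
    -- φ induces a group isomorphism M'/(σ^⊥ ∩ M') ≅ M_λ
    (Nonempty ((((Fin d → ℤ) × ℤ) ⧸ (phiHom d lq).ker) ≃+ ↥Mlam)) ∧
    -- (ii) σ^∨ ∩ M' = φ⁻¹(ρ^∨ ∩ M_λ)
    ({p : (Fin d → ℤ) × ℤ | ∀ x ∈ σ, 0 ≤ (∑ i, x.1 i * (p.1 i : ℝ)) + x.2 * (p.2 : ℝ)}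
      = {p : (Fin d → ℤ) × ℤ | qcastR (phiHom d lq p) ∈ dualSet ρ}) ∧
    -- a splitting of φ induces a monoid isomorphism σ^∨ ∩ M' ≅ ℤ × (ρ^∨ ∩ M_λ)
    (∃ Φ : ((Fin d → ℤ) × ℤ) →+ ℤ × (Fin d → ℚ), Function.Injective Φ ∧
      Φ '' {p | ∀ x ∈ σ, 0 ≤ (∑ i, x.1 i * (p.1 i : ℝ)) + x.2 * (p.2 : ℝ)}
        = (Set.univ : Set ℤ) ×ˢ {y : Fin d → ℚ | y ∈ Mlam ∧ qcastR y ∈ dualSet ρ}) := by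
  subst hMlam hnlam hσ
  rw [← zmultiples_eq_closure, relIndex_sup_zmultiples]
  set M := (intCastHomQ d).range
  set g := addOrderOf (lq : (Fin d → ℚ) ⧸ M)
  have hrange : (phiHom d lq).range = M ⊔ zmultiples lq := by
    rw [phiHom_eq_coprod, range_coprod_zmultiplesHom]
  obtain ⟨μ, hμ⟩ : (g : ℤ) • lq ∈ M := (zsmul_mem_iff_addOrderOf_dvd M lq g).mpr dvd_rfl
  have hker : (phiHom d lq).ker = zmultiples (-μ, (g : ℤ)) := by
    rw [phiHom_eq_coprod, ker_coprod_zmultiplesHom _ _ (intCastHomQ_injective d) hμ]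
  have hg : g ≠ 0 := addOrderOf_mk_ne_zero hn hlq_n
  -- `Module.Projective ℤ M_λ` is found as `M_λ` is finitely generated and torsion-free, hence free.
  obtain ⟨Φ, hΦ, hΦimage⟩ := exists_injective_image_preimage_eq hker fun h =>
    hg (Int.natCast_eq_zero.mp ((isOfFinAddOrder_iff_eq_zero _).mp h.snd))
  refine ⟨hrange, ⟨μ, fun i => by simpa [intCastHomQ] using congrFun hμ i, ?_⟩,
    coe_ker_phiHom_eq_perp_graph lq hρdim,
    ⟨(QuotientAddGroup.quotientKerEquivRange _).trans (AddEquiv.addSubgroupCongr hrange)⟩,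
    dual_graph_eq_preimage_phiHom lq ρ, Φ, hΦ, ?_⟩
  · ext p
    simp [hker, mem_zmultiples_iff, eq_comm]
  · rw [dual_graph_eq_preimage_phiHom, ← hrange]
    exact hΦimage {y | qcastR y ∈ dualSet ρ}

/-- The combinatorial description of the chart of the first toric
modification: `φ : M ⊕ ℤy → M_λ` is surjective, its kernel is `ℤ·n_λ(y − λ) = σ^⊥ ∩ M'`,
`φ` induces `M'/(σ^⊥ ∩ M') ≅ M_λ`, `σ^∨ ∩ M' = φ⁻¹(ρ^∨ ∩ M_λ)`, and there is an additive
monoid isomorphism `σ^∨ ∩ M' ≅ ℤ × (ρ^∨ ∩ M_λ)` induced by a splitting of `φ`. -/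
theorem stmt_5 (d : ℕ) (hd : 1 ≤ d) (n : ℕ) (hn : 1 ≤ n)
    (ρ : Set (Fin d → ℝ))
    (hρ : ∃ s : Finset (Fin d → ℤ), ρ = nonnegSpan (icastR '' (s : Set (Fin d → ℤ))))
    (hρdim : Submodule.span ℝ ρ = ⊤)
    (hdsc : ∀ u ∈ dualSet ρ, -u ∈ dualSet ρ → u = 0)
    (hddim : Submodule.span ℝ (dualSet ρ) = ⊤)
    (lq : Fin d → ℚ)
    (hlq_mem : qcastR lq ∈ dualSet ρ)
    (hlq_n : ∀ i, ∃ z : ℤ, lq i = (z : ℚ) / n)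
    (Mlam : AddSubgroup (Fin d → ℚ))
    (hMlam : Mlam = (intCastHomQ d).range ⊔ AddSubgroup.closure {lq})
    (nlam : ℕ)
    (hnlam : nlam = ((intCastHomQ d).range.relIndex Mlam))
    (σ : Set ((Fin d → ℝ) × ℝ))
    (hσ : σ = {p | p.1 ∈ ρ ∧ p.2 = ∑ i, p.1 i * (lq i : ℝ)}) :
    -- (i) φ is surjective onto M_λ
    ((phiHom d lq).range = Mlam) ∧
    -- the kernel of φ is ℤ·n_λ(y − λ) …
    (∃ μ : Fin d → ℤ, (∀ i, (μ i : ℚ) = (nlam : ℚ) * lq i) ∧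
      ((phiHom d lq).ker : Set ((Fin d → ℤ) × ℤ))
        = {p | ∃ z : ℤ, p = z • ((-μ, (nlam : ℤ)) : (Fin d → ℤ) × ℤ)}) ∧
    -- … and it equals σ^⊥ ∩ M'
    (((phiHom d lq).ker : Set ((Fin d → ℤ) × ℤ))
      = {p | ∀ x ∈ σ, (∑ i, x.1 i * (p.1 i : ℝ)) + x.2 * (p.2 : ℝ) = 0}) ∧
    -- φ induces a group isomorphism M'/(σ^⊥ ∩ M') ≅ M_λ
    (Nonempty ((((Fin d → ℤ) × ℤ) ⧸ (phiHom d lq).ker) ≃+ ↥Mlam)) ∧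
    -- (ii) σ^∨ ∩ M' = φ⁻¹(ρ^∨ ∩ M_λ)
    ({p : (Fin d → ℤ) × ℤ | ∀ x ∈ σ, 0 ≤ (∑ i, x.1 i * (p.1 i : ℝ)) + x.2 * (p.2 : ℝ)}
      = {p : (Fin d → ℤ) × ℤ | qcastR (phiHom d lq p) ∈ dualSet ρ}) ∧
    -- a splitting of φ induces a monoid isomorphism σ^∨ ∩ M' ≅ ℤ × (ρ^∨ ∩ M_λ)
    (∃ Φ : ((Fin d → ℤ) × ℤ) →+ ℤ × (Fin d → ℚ), Function.Injective Φ ∧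
      Φ '' {p | ∀ x ∈ σ, 0 ≤ (∑ i, x.1 i * (p.1 i : ℝ)) + x.2 * (p.2 : ℝ)}
        = (Set.univ : Set ℤ) ×ˢ {y : Fin d → ℚ | y ∈ Mlam ∧ qcastR y ∈ dualSet ρ}) :=
  stmt_5_general d n hn ρ hρdim lq hlq_n Mlam hMlam nlam hnlam σ hσ
end

section
/- Let ζ ∈ R_n be a quasi-ordinary branch with characteristic exponents λ_1, …, λ_g, and let L (resp. L_n) be the field of fractions of ℂ[[X_1,…,X_d]] (resp. of R_n). Then n_j ≥ 2 for all j = 1, …, g, the subfield L(ζ) of L_n equals L(X^{λ_1}, …, X^{λ_g}), and the degree [L(ζ) : L] equals n_1⋯n_g. -/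
set_option synthInstance.maxHeartbeats 1000000

/-- The lattices `M_0 = ℤ^d`, `M_j = M_{j-1} + ℤ·λ_j`. -/
def Mlat (d : ℕ) (lam : ℕ → Fin d → ℚ) : ℕ → AddSubgroup (Fin d → ℚ)
  | 0 => (intCastHomQ d).range
  | (j + 1) => Mlat d lam j ⊔ AddSubgroup.closure {lam (j + 1)}

/-- The exponent `m/n ∈ (1/n)ℤ^d` of the monomial `X^{m/n} = T^m`. -/
def expQ (d n : ℕ) (m : Fin d →₀ ℕ) : Fin d → ℚ := fun i => (m i : ℚ) / n

/-- `ζ ∈ R_n = ℂ[[T₁,…,T_d]] = ℂ[[X₁^{1/n},…,X_d^{1/n}]]` is a quasi-ordinary branch with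
characteristic exponents `lam 1 < ⋯ < lam g`:
(1) the `lam j` are totally ordered exponents of `ζ` with nonzero coefficient;
(2) every exponent of `ζ` lies in `ℤ^d + Σ_{i : lam i ≤ λ} ℤ·lam i`;
(3) `lam j ∉ M_{j-1}`. -/
def IsQOBranch (d n g : ℕ) (ζ : MvPowerSeries (Fin d) ℂ) (lam : ℕ → Fin d → ℚ) : Prop :=
  (∀ j, 1 ≤ j → j ≤ g →
    ∃ m : Fin d →₀ ℕ, expQ d n m = lam j ∧ MvPowerSeries.coeff m ζ ≠ 0) ∧
  (∀ j, 1 ≤ j → j < g → lam j < lam (j + 1)) ∧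
  (∀ m : Fin d →₀ ℕ, MvPowerSeries.coeff m ζ ≠ 0 →
    expQ d n m ∈ (intCastHomQ d).range ⊔
      AddSubgroup.closure {x | ∃ j, 1 ≤ j ∧ j ≤ g ∧ lam j ≤ expQ d n m ∧ x = lam j}) ∧
  (∀ j, 1 ≤ j → j ≤ g → lam j ∉ Mlat d lam (j - 1))

/-- The subset `ℂ[[X₁,…,X_d]] ⊆ R_n`: series all of whose exponents are divisible by `n`. -/
def bigXRing (d n : ℕ) : Set (MvPowerSeries (Fin d) ℂ) :=
  {φ | ∀ m : Fin d →₀ ℕ, MvPowerSeries.coeff m φ ≠ 0 → ∀ i, n ∣ m i}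

instance (d : ℕ) : IsDomain (MvPowerSeries (Fin d) ℂ) := NoZeroDivisors.to_isDomain _

/-!
`G = Hom((ℤ/n)^d, ℂˣ)` acts on `R_n = ℂ[[T]]` by `T^m ↦ χ(m mod n) T^m`, faithfully and with
invariant ring `ℂ[[X]]`; clearing denominators by norms shows that its fixed field in `Frac R_n` is
`L`, so `Frac R_n / L` is Galois with group `G`. An element of `G` fixes `ζ` iff it fixes every
monomial of `ζ`, i.e. iff it is trivial on the subgroup `V ⊆ (ℤ/n)^d` generated by the exponents of
`ζ` mod `n`. Condition (2) puts all those exponents in `M_g`, and `M_g = M_0 + Σ ℤλ_j` with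
`M_0 = ℤ^d`, so `V` is already generated by the `nλ_j` mod `n`: the stabilizers of `ζ` and of
`{X^{λ_j}}` coincide, hence so do `L(ζ)` and `L(X^{λ_1}, …, X^{λ_g})`. By duality the index of the
stabilizer is `|V| = [M_g : M_0] = n_1 ⋯ n_g`, and each `n_j ≥ 2` because `λ_j ∉ M_{j-1}`.
-/

instance Monoid.neZero_exponent {G : Type*} [LeftCancelMonoid G] [Finite G] :
    NeZero (Monoid.exponent G) :=
  ⟨Monoid.exponent_ne_zero_of_finite⟩

lemma MonoidHom.mem_ker_domRestrictHom {G M : Type*} [Group G] [CommGroup M] {H : Subgroup G}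
    {χ : G →* M} : χ ∈ (MonoidHom.domRestrictHom H M).ker ↔ H ≤ χ.ker := by
  simp [MonoidHom.mem_ker, DFunLike.ext_iff, SetLike.le_def]

theorem CommGroup.index_ker_domRestrictHom {G M : Type*} [CommGroup G] [Finite G] [CommMonoid M]
    [HasEnoughRootsOfUnity M (Monoid.exponent G)] (H : Subgroup G) :
    (MonoidHom.domRestrictHom H Mˣ).ker.index = Nat.card H := by
  have hcard := (MonoidHom.domRestrictHom H Mˣ).ker.card_mul_index
  rw [CommGroup.card_domRestrictHom_ker, CommGroup.card_monoidHom_of_hasEnoughRootsOfUnity,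
    H.card_eq_card_quotient_mul_card_subgroup] at hcard
  exact Nat.eq_of_mul_eq_mul_left Nat.card_pos hcard

lemma AddSubgroup.card_toSubgroup {A : Type*} [AddGroup A] (S : AddSubgroup A) :
    Nat.card S.toSubgroup = Nat.card S :=
  rfl

lemma AddSubgroup.prod_relIndex_Icc {A : Type*} [AddGroup A] {H : ℕ → AddSubgroup A}
    (hH : Monotone H) (g : ℕ) :
    ∏ j ∈ Finset.Icc 1 g, (H (j - 1)).relIndex (H j) = (H 0).relIndex (H g) := by
  induction g with
  | zero => simp
  | succ g ih =>
    rw [Finset.prod_Icc_succ_top (by omega), ih, Nat.add_sub_cancel,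
      AddSubgroup.relIndex_mul_relIndex _ _ _ (hH g.zero_le) (hH g.le_succ)]

section FixedSubfield

variable {G R K : Type*} [Group G] [Finite G] [CommRing R] [IsDomain R]
  [MulSemiringAction G R] [Field K] [Algebra R K] [IsFractionRing R K] [MulSemiringAction G K]
  [SMulDistribClass G R K]

omit [Finite G] [IsDomain R] in
lemma prod_smul_mem_fixedPoints [Fintype G] (b : R) :
    ∏ g : G, g • b ∈ MulAction.fixedPoints G R := fun h => by
  rw [Finset.smul_prod']
  exact Fintype.prod_equiv (Equiv.mulLeft h) _ _ fun g => (mul_smul h g b).symm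

/-- Clearing the denominator of a `G`-invariant fraction by the product of all the conjugates of
the denominator writes it as a quotient of invariants. -/
theorem FixedPoints.subfield_eq_closure_fixedPoints :
    FixedPoints.subfield G K = Subfield.closure (algebraMap R K '' MulAction.fixedPoints G R) := by
  refine le_antisymm (fun x hx => ?_) ?_
  · cases nonempty_fintype G
    classical
    obtain ⟨a, b, hb, rfl⟩ := IsFractionRing.div_surjective (A := R) x
    set c := ∏ g ∈ Finset.univ.erase (1 : G), g • b
    have hN : b * c = ∏ g : G, g • b := by
      rw [← Finset.mul_prod_erase _ _ (Finset.mem_univ 1), one_smul]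
    have hb0 : b ≠ 0 := nonZeroDivisors.ne_zero hb
    have hN0 : algebraMap R K (b * c) ≠ 0 := by
      rw [ne_eq, IsFractionRing.to_map_eq_zero_iff, hN, Finset.prod_eq_zero_iff]
      rintro ⟨g, -, hg⟩
      exact hb0 ((smul_eq_zero_iff_eq g).mp hg)
    have hx' : algebraMap R K a / algebraMap R K b * algebraMap R K (b * c)
        = algebraMap R K (a * c) := by
      have : algebraMap R K b ≠ 0 := by rw [ne_eq, IsFractionRing.to_map_eq_zero_iff]; exact hb0
      rw [map_mul, map_mul]
      field_simp
    have hac : a * c ∈ MulAction.fixedPoints G R := fun g => by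
      apply IsFractionRing.injective R K
      rw [algebraMap.smul', ← hx', smul_mul', hx g, ← algebraMap.smul', hN,
        prod_smul_mem_fixedPoints b g]
    rw [eq_div_of_mul_eq hN0 hx']
    exact div_mem (Subfield.subset_closure ⟨_, hac, rfl⟩)
      (Subfield.subset_closure ⟨_, hN ▸ prod_smul_mem_fixedPoints b, rfl⟩)
  · rw [Subfield.closure_le]
    rintro _ ⟨r, hr, rfl⟩ g
    rw [← algebraMap.smul', hr g]

end FixedSubfield

namespace IsGaloisGroup

variable (G : Type*) {K L : Type*} [Group G] [Field K] [Field L] [Algebra K L]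
  [MulSemiringAction G L] [IsGaloisGroup G K L]

theorem fixingSubgroup_adjoin (S : Set L) :
    fixingSubgroup G (IntermediateField.adjoin K S : Set L) = fixingSubgroup G S := by
  refine le_antisymm (fixingSubgroup_antitone G L (IntermediateField.subset_adjoin K S)) ?_
  rw [← le_fixedPoints_iff_le_fixingSubgroup, IntermediateField.adjoin_le_iff]
  exact fun x hx g => g.2 ⟨x, hx⟩

theorem adjoin_eq_of_fixingSubgroup_eq [Finite G] {S T : Set L}
    (h : fixingSubgroup G S = fixingSubgroup G T) :
    IntermediateField.adjoin K S = IntermediateField.adjoin K T := by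
  rw [← fixedPoints_fixingSubgroup G K L (IntermediateField.adjoin K S),
    ← fixedPoints_fixingSubgroup G K L (IntermediateField.adjoin K T), fixingSubgroup_adjoin,
    fixingSubgroup_adjoin, h]

theorem finrank_adjoin_eq_index [Finite G] (S : Set L) :
    Module.finrank K (IntermediateField.adjoin K S) = (fixingSubgroup G S).index := by
  have htower := Module.finrank_mul_finrank K (IntermediateField.adjoin K S) L
  rw [← card_fixingSubgroup_eq_finrank G K L, fixingSubgroup_adjoin, ← card_eq_finrank G K L,
    ← (fixingSubgroup G S).card_mul_index, mul_comm] at htower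
  exact Nat.eq_of_mul_eq_mul_left Nat.card_pos htower

end IsGaloisGroup

namespace MvPowerSeries

variable {σ R : Type*} [CommRing R] {n : ℕ}

def expResidue (σ : Type*) (n : ℕ) : (σ →₀ ℕ) →+ (σ → ZMod n) where
  toFun m i := m i
  map_zero' := by ext; simp
  map_add' m m' := by ext; simp

/-- A character `χ` of `(ℤ/n)^σ` acts on `T^m` by the scalar `χ (m mod n)`; for `R = ℂ` these are
the substitutions `Tᵢ ↦ ωᵢ Tᵢ` by `n`-th roots of unity, i.e. the Galois action of `R_n` over
`ℂ[[X]]`. -/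
noncomputable instance : SMul (Multiplicative (σ → ZMod n) →* Rˣ) (MvPowerSeries σ R) where
  smul χ φ m := χ (.ofAdd (expResidue σ n m)) * coeff m φ

lemma coeff_char_smul (χ : Multiplicative (σ → ZMod n) →* Rˣ) (φ : MvPowerSeries σ R)
    (m : σ →₀ ℕ) :
    coeff m (χ • φ) = χ (.ofAdd (expResidue σ n m)) * coeff m φ :=
  rfl

noncomputable instance :
    MulSemiringAction (Multiplicative (σ → ZMod n) →* Rˣ) (MvPowerSeries σ R) where
  one_smul φ := by ext m; simp [coeff_char_smul]
  mul_smul χ χ' φ := by ext m; simp [coeff_char_smul, mul_assoc]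
  smul_zero χ := by ext m; simp [coeff_char_smul]
  smul_add χ φ ψ := by ext m; simp [coeff_char_smul, mul_add]
  smul_one χ := by
    classical
    ext m
    rcases eq_or_ne m 0 with rfl | hm
    · simp [coeff_char_smul]
    · simp [coeff_char_smul, coeff_one, hm]
  smul_mul χ φ ψ := by
    classical
    ext m
    rw [coeff_char_smul, coeff_mul, coeff_mul, Finset.mul_sum]
    refine Finset.sum_congr rfl fun pq hpq => ?_
    rw [← Finset.HasAntidiagonal.mem_antidiagonal.mp hpq, map_add, ofAdd_add, map_mul,
      Units.val_mul, coeff_char_smul, coeff_char_smul]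
    ring

lemma expResidue_eq_zero_iff {m : σ →₀ ℕ} : expResidue σ n m = 0 ↔ ∀ i, n ∣ m i := by
  simp [funext_iff, expResidue, ZMod.natCast_eq_zero_iff]

lemma expResidue_surjective [Finite σ] [NeZero n] : Function.Surjective (expResidue σ n) :=
  fun v => ⟨Finsupp.equivFunOnFinite.symm fun i => (v i).val, by ext; simp [expResidue]⟩

lemma char_smul_eq_self_iff [IsDomain R] (χ : Multiplicative (σ → ZMod n) →* Rˣ)
    (φ : MvPowerSeries σ R) :
    χ • φ = φ ↔ ∀ m, coeff m φ ≠ 0 → χ (.ofAdd (expResidue σ n m)) = 1 := by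
  simp only [MvPowerSeries.ext_iff, coeff_char_smul, mul_left_eq_self₀, Units.val_eq_one]
  exact forall_congr' fun m => or_iff_not_imp_right

lemma char_smul_monomial_eq_self_iff [IsDomain R] (χ : Multiplicative (σ → ZMod n) →* Rˣ)
    (m : σ →₀ ℕ) :
    χ • monomial m (1 : R) = monomial m 1 ↔ χ (.ofAdd (expResidue σ n m)) = 1 := by
  classical
  rw [char_smul_eq_self_iff]
  refine ⟨fun h => h m (by simp), fun h m' hm' => ?_⟩
  obtain rfl : m' = m := by by_contra hne; simp [coeff_monomial, hne] at hm'
  exact h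

instance [Finite σ] [NeZero n] [Nontrivial R] :
    FaithfulSMul (Multiplicative (σ → ZMod n) →* Rˣ) (MvPowerSeries σ R) where
  eq_of_smul_eq_smul {χ χ'} h := by
    refine MonoidHom.ext fun v => ?_
    obtain ⟨m, hm⟩ := expResidue_surjective (Multiplicative.toAdd v)
    have := congrArg (coeff m) (h (monomial m 1))
    rw [← ofAdd_toAdd v, ← hm]
    exact Units.ext (by simpa [coeff_char_smul] using this)

lemma forall_char_smul_eq_self_iff [Finite σ] [NeZero n] (φ : MvPowerSeries σ ℂ) :
    (∀ χ : Multiplicative (σ → ZMod n) →* ℂˣ, χ • φ = φ) ↔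
      ∀ m, coeff m φ ≠ 0 → ∀ i, n ∣ m i := by
  have separates (g : Multiplicative (σ → ZMod n)) :
      (∀ χ : Multiplicative (σ → ZMod n) →* ℂˣ, χ g = 1) ↔ g = 1 := by
    simpa using CommGroup.forall_apply_eq_apply_iff _ (M := ℂ) (g := g) (g' := 1)
  simp only [char_smul_eq_self_iff]
  constructor
  · intro h m hm
    rw [← expResidue_eq_zero_iff, ← ofAdd_eq_one, ← separates]
    exact fun χ => h χ m hm
  · intro h χ m hm
    exact (separates _).mpr (by rw [ofAdd_eq_one, expResidue_eq_zero_iff]; exact h m hm) χ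

end MvPowerSeries

section Lattice

variable {d n : ℕ}

/-- Identifies `ℤ^d` with the lattice `(1/n)ℤ^d` of exponents of `R_n`. -/
def divHom (d n : ℕ) : (Fin d → ℤ) →+ (Fin d → ℚ) where
  toFun x i := x i / n
  map_zero' := by ext; simp
  map_add' x y := by ext; simp [add_div]

def residueHom (d n : ℕ) : (Fin d → ℤ) →+ (Fin d → ZMod n) :=
  (Int.castAddHom (ZMod n)).compLeft (Fin d)

lemma divHom_injective [NeZero n] : Function.Injective (divHom d n) := fun x y h => by
  ext i
  have := congrFun h i
  simp only [divHom, AddMonoidHom.coe_mk, ZeroHom.coe_mk] at this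
  exact_mod_cast (div_left_inj' (Nat.cast_ne_zero.mpr (NeZero.ne n))).mp this

lemma map_ker_residueHom [NeZero n] :
    (residueHom d n).ker.map (divHom d n) = (intCastHomQ d).range := by
  have hn : (n : ℚ) ≠ 0 := Nat.cast_ne_zero.mpr (NeZero.ne n)
  ext q
  constructor
  · rintro ⟨x, hx, rfl⟩
    have hdvd (i : Fin d) : (n : ℤ) ∣ x i :=
      (ZMod.intCast_zmod_eq_zero_iff_dvd _ _).mp (congrFun hx i)
    choose y hy using hdvd
    refine ⟨y, funext fun i => ?_⟩
    simp [intCastHomQ, divHom, hy i, hn]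
  · rintro ⟨y, rfl⟩
    refine ⟨fun i => n * y i, funext fun i => by simp [residueHom], funext fun i => ?_⟩
    simp [intCastHomQ, divHom, hn]

lemma Mlat_eq_map [NeZero n] (lam : ℕ → Fin d → ℚ) (mz : ℕ → Fin d → ℤ) {j : ℕ}
    (h : ∀ i ∈ Set.Icc 1 j, divHom d n (mz i) = lam i) :
    Mlat d lam j =
      ((residueHom d n).ker ⊔ AddSubgroup.closure (mz '' Set.Icc 1 j)).map (divHom d n) := by
  induction j with
  | zero => simp [Mlat, map_ker_residueHom]
  | succ j ih =>
    have hIcc : Set.Icc 1 (j + 1) = {j + 1} ∪ Set.Icc 1 j := by ext; simp; omega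
    rw [Mlat, ih fun i hi => h i ⟨hi.1, hi.2.trans j.le_succ⟩, hIcc, Set.image_union,
      AddSubgroup.closure_union, AddSubgroup.map_sup, AddSubgroup.map_sup, AddSubgroup.map_sup,
      AddMonoidHom.map_closure (divHom d n) (mz '' {j + 1}), Set.image_singleton,
      Set.image_singleton, h (j + 1) ⟨by omega, le_rfl⟩]
    ac_rfl

lemma map_comap_Mlat [NeZero n] (lam : ℕ → Fin d → ℚ) (mz : ℕ → Fin d → ℤ) {j : ℕ}
    (h : ∀ i ∈ Set.Icc 1 j, divHom d n (mz i) = lam i) :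
    ((Mlat d lam j).comap (divHom d n)).map (residueHom d n) =
      AddSubgroup.closure (residueHom d n ∘ mz '' Set.Icc 1 j) := by
  rw [Mlat_eq_map lam mz h, AddSubgroup.comap_map_eq_self_of_injective divHom_injective,
    AddSubgroup.map_sup, AddSubgroup.map_ker_self, bot_sup_eq, AddMonoidHom.map_closure,
    Set.image_comp]

lemma card_map_comap_Mlat [NeZero n] (lam : ℕ → Fin d → ℚ) (mz : ℕ → Fin d → ℤ) {j : ℕ}
    (h : ∀ i ∈ Set.Icc 1 j, divHom d n (mz i) = lam i) :
    Nat.card (((Mlat d lam j).comap (divHom d n)).map (residueHom d n)) =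
      (Mlat d lam 0).relIndex (Mlat d lam j) := by
  rw [← AddSubgroup.relIndex_ker, ← AddSubgroup.comap_map_eq_self_of_injective
    (divHom_injective (d := d) (n := n)) (residueHom d n).ker, map_ker_residueHom,
    AddSubgroup.relIndex_comap, AddSubgroup.map_comap_eq, Mlat_eq_map lam mz h,
    inf_eq_right.mpr (AddSubgroup.map_le_range _ _)]
  rfl

lemma divHom_natCast (m : Fin d →₀ ℕ) : divHom d n (fun i => (m i : ℤ)) = expQ d n m := by
  ext; simp [divHom, expQ]

lemma residueHom_natCast (m : Fin d →₀ ℕ) :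
    residueHom d n (fun i => (m i : ℤ)) = MvPowerSeries.expResidue (Fin d) n m := by
  ext; simp [residueHom, MvPowerSeries.expResidue]

lemma expQ_injective [NeZero n] : Function.Injective (expQ d n) := fun m m' h => by
  ext i
  have := congrFun h i
  simp only [expQ] at this
  exact_mod_cast (div_left_inj' (Nat.cast_ne_zero.mpr (NeZero.ne n))).mp this

lemma expQ_eq_of_natCast_eq_mul [NeZero n] {m : Fin d →₀ ℕ} {q : Fin d → ℚ}
    (h : ∀ i, (m i : ℚ) = n * q i) :
    expQ d n m = q := by
  ext i
  rw [expQ, h, mul_div_cancel_left₀ _ (Nat.cast_ne_zero.mpr (NeZero.ne n))]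

lemma Mlat_mono (lam : ℕ → Fin d → ℚ) : Monotone (Mlat d lam) :=
  monotone_nat_of_le_succ fun _ => le_sup_left

lemma lam_mem_Mlat (lam : ℕ → Fin d → ℚ) {j : ℕ} (hj : 1 ≤ j) : lam j ∈ Mlat d lam j := by
  obtain ⟨i, rfl⟩ := Nat.exists_eq_add_of_le' hj
  exact AddSubgroup.mem_sup_right (AddSubgroup.subset_closure rfl)

end Lattice

section QuasiOrdinary

variable {d n : ℕ}

local notation "Γ" => Multiplicative (Fin d → ZMod n) →* ℂˣ
local notation "K" => FractionRing (MvPowerSeries (Fin d) ℂ)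
local notation "ι" => algebraMap (MvPowerSeries (Fin d) ℂ) K

open MvPowerSeries

noncomputable instance : MulSemiringAction Γ K :=
  IsFractionRing.mulSemiringAction _ (MvPowerSeries (Fin d) ℂ) _

instance : SMulDistribClass Γ (MvPowerSeries (Fin d) ℂ) K :=
  IsFractionRing.smulDistribClass Γ (MvPowerSeries (Fin d) ℂ) K

instance [NeZero n] : FaithfulSMul Γ K :=
  IsFractionRing.faithfulSMul _ (MvPowerSeries (Fin d) ℂ) _

lemma bigXRing_eq_fixedPoints [NeZero n] :
    bigXRing d n = MulAction.fixedPoints Γ (MvPowerSeries (Fin d) ℂ) := by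
  ext φ
  exact (MvPowerSeries.forall_char_smul_eq_self_iff φ).symm

lemma closure_bigXRing_eq_fixedPoints [NeZero n] :
    Subfield.closure (ι '' bigXRing d n) = FixedPoints.subfield Γ K := by
  rw [bigXRing_eq_fixedPoints,
    FixedPoints.subfield_eq_closure_fixedPoints (R := MvPowerSeries (Fin d) ℂ)]

lemma fixingSubgroup_monomials (E : Set (Fin d →₀ ℕ)) :
    fixingSubgroup Γ ((fun m => ι (monomial m 1)) '' E) =
      (MonoidHom.domRestrictHom
        (AddSubgroup.closure (expResidue (Fin d) n '' E)).toSubgroup ℂˣ).ker := by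
  ext χ
  rw [mem_fixingSubgroup_iff, MonoidHom.mem_ker_domRestrictHom, AddSubgroup.toSubgroup_closure,
    Subgroup.closure_le]
  simp only [Set.forall_mem_image, ← algebraMap.smul', (IsFractionRing.injective _ K).eq_iff,
    char_smul_monomial_eq_self_iff]
  constructor
  · rintro h v ⟨m, hm, hv⟩
    rw [SetLike.mem_coe, MonoidHom.mem_ker, ← ofAdd_toAdd v, ← hv]
    exact h hm
  · exact fun h m hm => h ⟨m, hm, rfl⟩

lemma fixingSubgroup_singleton (φ : MvPowerSeries (Fin d) ℂ) :
    fixingSubgroup Γ {ι φ} =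
      fixingSubgroup Γ ((fun m => ι (monomial m 1)) '' {m | coeff m φ ≠ 0}) := by
  ext χ
  simp only [mem_fixingSubgroup_iff, Set.forall_mem_image, Set.mem_singleton_iff, forall_eq,
    ← algebraMap.smul', (IsFractionRing.injective _ K).eq_iff, char_smul_monomial_eq_self_iff,
    Set.mem_ofPred_eq]
  exact char_smul_eq_self_iff χ φ

variable {g : ℕ} {ζ : MvPowerSeries (Fin d) ℂ} {lam : ℕ → Fin d → ℚ} {mexp : ℕ → Fin d →₀ ℕ}

lemma expQ_mem_Mlat (hqo : IsQOBranch d n g ζ lam) {m : Fin d →₀ ℕ} (hm : coeff m ζ ≠ 0) :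
    expQ d n m ∈ Mlat d lam g := by
  refine sup_le (Mlat_mono lam g.zero_le) ?_ (hqo.2.2.1 m hm)
  rw [AddSubgroup.closure_le]
  rintro _ ⟨j, hj1, hjg, -, rfl⟩
  exact Mlat_mono lam hjg (lam_mem_Mlat lam hj1)

lemma fixingSubgroup_monomials_mexp :
    fixingSubgroup Γ {x : K | ∃ j, 1 ≤ j ∧ j ≤ g ∧ x = ι (monomial (mexp j) 1)} =
      (MonoidHom.domRestrictHom
        (AddSubgroup.closure (expResidue (Fin d) n '' (mexp '' Set.Icc 1 g))).toSubgroup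
          ℂˣ).ker := by
  rw [← fixingSubgroup_monomials, ← Set.image_comp]
  congr 1
  ext
  simp [eq_comm, and_assoc]

variable [NeZero n] (hmexp : ∀ j, 1 ≤ j → j ≤ g → ∀ i, ((mexp j) i : ℚ) = (n : ℚ) * lam j i)
include hmexp

lemma closure_expResidue_eq_map_comap_Mlat :
    AddSubgroup.closure (expResidue (Fin d) n '' (mexp '' Set.Icc 1 g)) =
      ((Mlat d lam g).comap (divHom d n)).map (residueHom d n) := by
  rw [map_comap_Mlat lam (fun j i => (mexp j i : ℤ)), ← Set.image_comp]
  · simp only [Function.comp_def, residueHom_natCast]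
  · intro j hj
    rw [divHom_natCast, expQ_eq_of_natCast_eq_mul (hmexp j hj.1 hj.2)]

lemma card_closure_expResidue :
    Nat.card (AddSubgroup.closure (expResidue (Fin d) n '' (mexp '' Set.Icc 1 g))) =
      (Mlat d lam 0).relIndex (Mlat d lam g) := by
  rw [closure_expResidue_eq_map_comap_Mlat hmexp,
    card_map_comap_Mlat lam (fun j i => (mexp j i : ℤ))]
  intro j hj
  rw [divHom_natCast, expQ_eq_of_natCast_eq_mul (hmexp j hj.1 hj.2)]

lemma closure_expResidue_support (hqo : IsQOBranch d n g ζ lam) :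
    AddSubgroup.closure (expResidue (Fin d) n '' {m | coeff m ζ ≠ 0}) =
      AddSubgroup.closure (expResidue (Fin d) n '' (mexp '' Set.Icc 1 g)) := by
  refine le_antisymm ?_ (AddSubgroup.closure_mono (Set.image_mono ?_))
  · rw [AddSubgroup.closure_le, closure_expResidue_eq_map_comap_Mlat hmexp]
    rintro _ ⟨m, hm, rfl⟩
    refine ⟨fun i => (m i : ℤ), ?_, residueHom_natCast m⟩
    rw [SetLike.mem_coe, AddSubgroup.mem_comap, divHom_natCast]
    exact expQ_mem_Mlat hqo hm
  · rintro _ ⟨j, hj, rfl⟩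
    obtain ⟨m, hm, hζm⟩ := hqo.1 j hj.1 hj.2
    rwa [← expQ_injective (hm.trans (expQ_eq_of_natCast_eq_mul (hmexp j hj.1 hj.2)).symm)]

lemma fixingSubgroup_qoBranch (hqo : IsQOBranch d n g ζ lam) :
    fixingSubgroup Γ {ι ζ} =
      (MonoidHom.domRestrictHom
        (AddSubgroup.closure (expResidue (Fin d) n '' (mexp '' Set.Icc 1 g))).toSubgroup
          ℂˣ).ker := by
  rw [fixingSubgroup_singleton, fixingSubgroup_monomials, closure_expResidue_support hmexp hqo]

lemma two_le_relIndex_Mlat (hqo : IsQOBranch d n g ζ lam) {j : ℕ} (hj1 : 1 ≤ j) (hjg : j ≤ g) :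
    2 ≤ (Mlat d lam (j - 1)).relIndex (Mlat d lam j) := by
  have hne1 : (Mlat d lam (j - 1)).relIndex (Mlat d lam j) ≠ 1 := fun h =>
    hqo.2.2.2 j hj1 hjg (AddSubgroup.relIndex_eq_one.mp h (lam_mem_Mlat lam hj1))
  have hdvd :
      (Mlat d lam (j - 1)).relIndex (Mlat d lam j) ∣ (Mlat d lam 0).relIndex (Mlat d lam g) :=
    AddSubgroup.prod_relIndex_Icc (Mlat_mono lam) g ▸
      Finset.dvd_prod_of_mem _ (Finset.mem_Icc.mpr ⟨hj1, hjg⟩)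
  rw [← card_closure_expResidue hmexp] at hdvd
  have hne0 : (Mlat d lam (j - 1)).relIndex (Mlat d lam j) ≠ 0 := fun h0 =>
    Nat.card_pos.ne' (Nat.eq_zero_of_zero_dvd (h0 ▸ hdvd))
  omega

end QuasiOrdinary

open Finset in
theorem stmt_14_general (d n g : ℕ) (hn : 1 ≤ n)
    (ζ : MvPowerSeries (Fin d) ℂ) (lam : ℕ → Fin d → ℚ)
    (hqo : IsQOBranch d n g ζ lam)
    (nj : ℕ → ℕ)
    (hnj : ∀ j, 1 ≤ j → j ≤ g →
      nj j = (Mlat d lam (j - 1)).relIndex (Mlat d lam j))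
    (mexp : ℕ → (Fin d →₀ ℕ))
    (hmexp : ∀ j, 1 ≤ j → j ≤ g → ∀ i, ((mexp j) i : ℚ) = (n : ℚ) * lam j i) :
    letI K := FractionRing (MvPowerSeries (Fin d) ℂ)
    letI ι := algebraMap (MvPowerSeries (Fin d) ℂ) K
    letI L : Subfield K := Subfield.closure (ι '' bigXRing d n)
    (∀ j, 1 ≤ j → j ≤ g → 2 ≤ nj j) ∧
    IntermediateField.adjoin ↥L {ι ζ}
      = IntermediateField.adjoin ↥L
          {x : K | ∃ j, 1 ≤ j ∧ j ≤ g ∧ x = ι (MvPowerSeries.monomial (mexp j) 1)} ∧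
    Module.finrank ↥L ↥(IntermediateField.adjoin ↥L {ι ζ}) = ∏ j ∈ Icc 1 g, nj j := by
  have : NeZero n := ⟨by omega⟩
  rw [closure_bigXRing_eq_fixedPoints]
  refine ⟨fun j hj1 hjg => hnj j hj1 hjg ▸ two_le_relIndex_Mlat hmexp hqo hj1 hjg,
    IsGaloisGroup.adjoin_eq_of_fixingSubgroup_eq _
      ((fixingSubgroup_qoBranch hmexp hqo).trans fixingSubgroup_monomials_mexp.symm), ?_⟩
  rw [IsGaloisGroup.finrank_adjoin_eq_index (Multiplicative (Fin d → ZMod n) →* ℂˣ),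
    fixingSubgroup_qoBranch hmexp hqo, CommGroup.index_ker_domRestrictHom,
    AddSubgroup.card_toSubgroup, card_closure_expResidue hmexp,
    ← AddSubgroup.prod_relIndex_Icc (Mlat_mono lam)]
  exact Finset.prod_congr rfl fun j hj => (hnj j (mem_Icc.mp hj).1 (mem_Icc.mp hj).2).symm

open Finset in
/-- For a quasi-ordinary branch `ζ` with characteristic exponents
`lam 1, …, lam g`: the characteristic integers satisfy `n_j ≥ 2`, the field `L(ζ)` equals
`L(X^{λ₁}, …, X^{λ_g})`, and `[L(ζ) : L] = n₁ ⋯ n_g`, where `L = Frac ℂ[[X₁,…,X_d]]` and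
`X^{λ_j}` is the monomial `T^{n·λ_j}`. -/
theorem stmt_14 (d n g : ℕ) (hd : 1 ≤ d) (hn : 1 ≤ n) (hg : 1 ≤ g)
    (ζ : MvPowerSeries (Fin d) ℂ) (lam : ℕ → Fin d → ℚ)
    (hqo : IsQOBranch d n g ζ lam)
    (nj : ℕ → ℕ)
    (hnj : ∀ j, 1 ≤ j → j ≤ g →
      nj j = (Mlat d lam (j - 1)).relIndex (Mlat d lam j))
    (mexp : ℕ → (Fin d →₀ ℕ))
    (hmexp : ∀ j, 1 ≤ j → j ≤ g → ∀ i, ((mexp j) i : ℚ) = (n : ℚ) * lam j i) :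
    letI K := FractionRing (MvPowerSeries (Fin d) ℂ)
    letI ι := algebraMap (MvPowerSeries (Fin d) ℂ) K
    letI L : Subfield K := Subfield.closure (ι '' bigXRing d n)
    (∀ j, 1 ≤ j → j ≤ g → 2 ≤ nj j) ∧
    IntermediateField.adjoin ↥L {ι ζ}
      = IntermediateField.adjoin ↥L
          {x : K | ∃ j, 1 ≤ j ∧ j ≤ g ∧ x = ι (MvPowerSeries.monomial (mexp j) 1)} ∧
    Module.finrank ↥L ↥(IntermediateField.adjoin ↥L {ι ζ}) = ∏ j ∈ Icc 1 g, nj j :=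
  stmt_14_general d n g hn ζ lam hqo nj hnj mexp hmexp
end

section
/- Let d ≥ 0 and g ≥ 1, and let φ_1, …, φ_g ∈ ℂ[[X_1,…,X_d,U_1,…,U_g]] be formal power series such that for each i the image of φ_i under the substitution X_1 = ⋯ = X_d = 0 (the natural map to ℂ[[U_1,…,U_g]]) equals U_i. Then there exist ε_1, …, ε_g ∈ ℂ[[X_1,…,X_d]] with zero constant term such that the ideals (φ_1, …, φ_g) and (U_1 − ε_1, …, U_g − ε_g) of ℂ[[X_1,…,X_d,U_1,…,U_g]] coincide. -/
/-- Setting the `X`-variables to `0`: the natural map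
`ℂ[[X₁,…,X_d,U₁,…,U_g]] → ℂ[[U₁,…,U_g]]`. -/
noncomputable def setXToZero (d g : ℕ) (φ : MvPowerSeries (Fin d ⊕ Fin g) ℂ) :
    MvPowerSeries (Fin g) ℂ :=
  fun m => MvPowerSeries.coeff (m.embDomain (.inr : Fin g ↪ Fin d ⊕ Fin g)) φ

/-!
Write `φ_j = U_j - θ_j`, where `θ_j` has positive order in the `X`-variables. Splitting off the
part of a series free of the `U`'s and replacing, in the rest, one factor `U_j` of each monomial by
`θ_j` raises the `X`-order, so iterating converges in the coefficientwise topology and reduces any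
series modulo `(φ)` to a series in the `X`'s alone. Applied to `U_i` this gives `U - ε = Q φ` for a
matrix `Q` of power series. Comparing the coefficients of the `U_k` on both sides shows that
`Q` has constant term `1`, so `Q` is invertible and the two ideals coincide.
-/

open Filter Topology Finsupp
open scoped Matrix

theorem Ideal.span_range_mulVec {S κ : Type*} [CommRing S] [Fintype κ] [DecidableEq κ]
    {Q : Matrix κ κ S} (hQ : IsUnit Q) (v : κ → S) :
    Ideal.span (Set.range (Q *ᵥ v)) = Ideal.span (Set.range v) := by
  have span_le : ∀ (M : Matrix κ κ S) (v : κ → S),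
      Ideal.span (Set.range (M *ᵥ v)) ≤ Ideal.span (Set.range v) := by
    intro M v
    rw [Ideal.span_le]
    rintro _ ⟨i, rfl⟩
    exact Ideal.mem_span_range_iff_exists_fun.mpr ⟨M i, rfl⟩
  obtain ⟨u, rfl⟩ := hQ
  refine (span_le _ v).antisymm ?_
  simpa [Matrix.mulVec_mulVec] using span_le (↑u⁻¹ : Matrix κ κ S) (↑u *ᵥ v)

theorem HasSum.eq_of_sub_succ {G : Type*} [AddCommGroup G] [TopologicalSpace G]
    [IsTopologicalAddGroup G] [T2Space G] {F : ℕ → G} {s : G}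
    (hs : HasSum (fun k => F k - F (k + 1)) s) (hF : Tendsto F atTop (𝓝 0)) : s = F 0 := by
  refine tendsto_nhds_unique hs.tendsto_sum_nat ?_
  simp only [Finset.sum_range_sub']
  simpa using (tendsto_const_nhds (x := F 0)).sub hF

namespace MvPowerSeries

variable {A : Type*} [CommRing A]

section General

variable {σ : Type*}

theorem coeff_X_mul_eq_ite (s : σ) (f : MvPowerSeries σ A) (n : σ →₀ ℕ) :
    coeff n (X s * f) = if single s 1 ≤ n then coeff (n - single s 1) f else 0 := by
  rw [X_def, coeff_monomial_mul, one_mul]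

theorem coeff_index_single_mul_of_constantCoeff_eq_zero {φ : MvPowerSeries σ A}
    (hφ : constantCoeff φ = 0) (q : MvPowerSeries σ A) (s : σ) :
    coeff (single s 1) (q * φ) = constantCoeff q * coeff (single s 1) φ := by
  classical
  rw [coeff_mul, antidiagonal_single]
  simp [Finset.Nat.antidiagonal_succ, hφ]

theorem le_weightedOrder_sum (w : σ → ℕ) {ι : Type*} (s : Finset ι) (f : ι → MvPowerSeries σ A)
    {n : ℕ∞} (h : ∀ i ∈ s, n ≤ (f i).weightedOrder w) : n ≤ (∑ i ∈ s, f i).weightedOrder w :=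
  le_weightedOrder w fun d hd => by
    rw [map_sum]
    exact Finset.sum_eq_zero fun i hi => coeff_eq_zero_of_lt_weightedOrder w (hd.trans_le (h i hi))

theorem coeff_eq_of_lt_weightedOrder_sub (w : σ → ℕ) {f g : MvPowerSeries σ A} {d : σ →₀ ℕ}
    (h : weight w d < (f - g).weightedOrder w) : coeff d f = coeff d g := by
  rw [← sub_eq_zero, ← map_sub, coeff_eq_zero_of_lt_weightedOrder w h]

theorem _root_.Matrix.isUnit_of_isUnit_map_constantCoeff {κ : Type*} [Fintype κ] [DecidableEq κ]
    {Q : Matrix κ κ (MvPowerSeries σ A)} (h : IsUnit (Q.map constantCoeff)) : IsUnit Q := by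
  rw [Matrix.isUnit_iff_isUnit_det, isUnit_iff_constantCoeff, RingHom.map_det]
  exact (Matrix.isUnit_iff_isUnit_det _).mp h

section PiTopology

open WithPiTopology

variable [TopologicalSpace A] (w : σ → ℕ) {F : ℕ → MvPowerSeries σ A}

theorem summable_of_natCast_le_weightedOrder (hF : ∀ k : ℕ, (k : ℕ∞) ≤ (F k).weightedOrder w) :
    Summable F :=
  summable_of_tendsto_weightedOrder_atTop_nhds_top (ENat.tendsto_nhds_top_iff_natCast_lt.mpr
    fun n => eventually_atTop.mpr ⟨n + 1, fun k hk => (Nat.cast_lt.mpr hk).trans_le (hF k)⟩)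

theorem tendsto_zero_of_natCast_le_weightedOrder (hF : ∀ k : ℕ, (k : ℕ∞) ≤ (F k).weightedOrder w) :
    Tendsto F atTop (𝓝 0) := by
  refine (tendsto_iff_coeff_tendsto _ _ _).mpr fun m => tendsto_const_nhds.congr' ?_
  filter_upwards [eventually_gt_atTop (weight w m)] with k hk
  rw [map_zero, coeff_eq_zero_of_lt_weightedOrder w ((Nat.cast_lt.mpr hk).trans_le (hF k))]

end PiTopology

end General

variable {ι κ : Type*}

/-- With this weight, `weightedOrder inlWeight` is the order in the variables `Sum.inl i`. -/
def inlWeight : ι ⊕ κ → ℕ := Sum.elim 1 0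

@[simp]
theorem weight_inlWeight_single_inr (j : κ) :
    weight (inlWeight (ι := ι)) (single (Sum.inr j) 1) = 0 := by
  simp [inlWeight, weight_single]

theorem one_le_weightedOrder_X_inr_sub_of_killCompl_eq {f : MvPowerSeries (ι ⊕ κ) A} {j : κ}
    (hf : killCompl Function.Embedding.inr f = X j) :
    1 ≤ (X (Sum.inr j) - f).weightedOrder inlWeight := by
  refine_lift nat_le_weightedOrder inlWeight fun m hm => ?_
  obtain ⟨n, rfl⟩ : m ∈ Set.range (embDomain .inr) := by
    refine (mem_range_embDomain_iff _ _).mpr fun s hs => ?_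
    rcases s with l | i
    · exact absurd (le_weight_of_ne_zero' inlWeight (mem_support_iff.mp hs))
        (by simpa [inlWeight] using hm)
    · exact ⟨i, rfl⟩
  have hX : killCompl Function.Embedding.inr (X (Sum.inr j) : MvPowerSeries (ι ⊕ κ) A) = X j :=
    killCompl_X j
  rw [← coeff_killCompl, map_sub, hX, hf, sub_self, map_zero]

def IsInlSupported (f : MvPowerSeries (ι ⊕ κ) A) : Prop :=
  ∀ m, coeff m f ≠ 0 → ∀ j, m (Sum.inr j) = 0

theorem IsInlSupported.coeff_eq_zero {f : MvPowerSeries (ι ⊕ κ) A} (hf : IsInlSupported f)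
    {m : ι ⊕ κ →₀ ℕ} {j : κ} (hm : m (Sum.inr j) ≠ 0) : coeff m f = 0 :=
  by_contra fun h => hm (hf m h j)

open scoped Classical in
noncomputable def inlPart (f : MvPowerSeries (ι ⊕ κ) A) : MvPowerSeries (ι ⊕ κ) A :=
  fun m => if ∀ j, m (Sum.inr j) = 0 then coeff m f else 0

open scoped Classical in
theorem coeff_inlPart (f : MvPowerSeries (ι ⊕ κ) A) (m : ι ⊕ κ →₀ ℕ) :
    coeff m (inlPart f) = if ∀ j, m (Sum.inr j) = 0 then coeff m f else 0 :=
  rfl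

theorem isInlSupported_inlPart (f : MvPowerSeries (ι ⊕ κ) A) : IsInlSupported (inlPart f) :=
  fun m hm => by_contra fun hU => hm (by rw [coeff_inlPart, if_neg hU])

theorem weightedOrder_le_inlPart (f : MvPowerSeries (ι ⊕ κ) A) :
    f.weightedOrder inlWeight ≤ (inlPart f).weightedOrder inlWeight :=
  le_weightedOrder _ fun m hm => by
    rw [coeff_inlPart, coeff_eq_zero_of_lt_weightedOrder _ hm, ite_self]

section Decomposition

variable [LinearOrder κ]

open scoped Classical in
/-- Divides by `X (Sum.inr j)` the monomials of `f` whose least `inr`-variable is `Sum.inr j`. -/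
noncomputable def inrQuot (f : MvPowerSeries (ι ⊕ κ) A) (j : κ) : MvPowerSeries (ι ⊕ κ) A :=
  fun m => if ∀ i < j, m (Sum.inr i) = 0 then coeff (m + single (Sum.inr j) 1) f else 0

open scoped Classical in
theorem coeff_inrQuot (f : MvPowerSeries (ι ⊕ κ) A) (j : κ) (m : ι ⊕ κ →₀ ℕ) :
    coeff m (inrQuot f j) =
      if ∀ i < j, m (Sum.inr i) = 0 then coeff (m + single (Sum.inr j) 1) f else 0 :=
  rfl

theorem weightedOrder_le_inrQuot (f : MvPowerSeries (ι ⊕ κ) A) (j : κ) :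
    f.weightedOrder inlWeight ≤ (inrQuot f j).weightedOrder inlWeight :=
  le_weightedOrder _ fun m hm => by
    rw [coeff_inrQuot, coeff_eq_zero_of_lt_weightedOrder inlWeight
      (by rwa [map_add, weight_inlWeight_single_inr, add_zero]), ite_self]

open scoped Classical in
theorem coeff_X_inr_mul_inrQuot (f : MvPowerSeries (ι ⊕ κ) A) (j : κ) (n : ι ⊕ κ →₀ ℕ) :
    coeff n (X (Sum.inr j) * inrQuot f j) =
      if n (Sum.inr j) ≠ 0 ∧ ∀ i < j, n (Sum.inr i) = 0 then coeff n f else 0 := by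
  rw [coeff_X_mul_eq_ite]
  by_cases hj : n (Sum.inr j) = 0
  · simp [hj]
  have hle : single (Sum.inr j) 1 ≤ n := by
    rw [single_le_iff]
    omega
  have hsub : ∀ i < j, (n - single (Sum.inr j) 1 : ι ⊕ κ →₀ ℕ) (Sum.inr i) = n (Sum.inr i) :=
    fun i hi => by simp [hi.ne]
  simp only [hle, if_true, hj, ne_eq, not_false_eq_true, true_and]
  rw [coeff_inrQuot, tsub_add_cancel_of_le hle]
  exact if_congr ⟨fun H i hi => hsub i hi ▸ H i hi, fun H i hi => (hsub i hi).symm ▸ H i hi⟩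
    rfl rfl

theorem eq_inlPart_add_sum_X_inr_mul_inrQuot [Fintype κ] (f : MvPowerSeries (ι ⊕ κ) A) :
    f = inlPart f + ∑ j, X (Sum.inr j) * inrQuot f j := by
  ext n
  rw [map_add, map_sum, Finset.sum_congr rfl fun j _ => coeff_X_inr_mul_inrQuot f j n,
    coeff_inlPart]
  by_cases hU : ∀ j, n (Sum.inr j) = 0
  · simp [hU]
  obtain ⟨j, hj⟩ := not_forall.mp hU
  obtain ⟨j₀, hj₀, hmin⟩ := (Finset.univ.filter fun j => n (Sum.inr j) ≠ 0).exists_min_image id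
    ⟨j, by simpa using hj⟩
  simp only [Finset.mem_filter, Finset.mem_univ, true_and, id] at hj₀ hmin
  have hleast : ∀ j, (n (Sum.inr j) ≠ 0 ∧ ∀ i < j, n (Sum.inr i) = 0) ↔ j = j₀ := by
    refine fun j => ⟨fun ⟨hj, hlt⟩ => le_antisymm ?_ (hmin j hj), ?_⟩
    · by_contra! H
      exact hj₀ (hlt j₀ H)
    · rintro rfl
      exact ⟨hj₀, fun i hi => by_contra fun H => absurd hi (not_lt.2 (hmin i H))⟩
  simp only [hleast, Finset.sum_ite_eq', Finset.mem_univ, if_true]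
  rw [if_neg fun H => hj₀ (H j₀), zero_add]

variable [Fintype κ]

noncomputable def inrReduce (φ : κ → MvPowerSeries (ι ⊕ κ) A) (f : MvPowerSeries (ι ⊕ κ) A) :
    MvPowerSeries (ι ⊕ κ) A :=
  ∑ j, (X (Sum.inr j) - φ j) * inrQuot f j

theorem sub_inrReduce (φ : κ → MvPowerSeries (ι ⊕ κ) A) (f : MvPowerSeries (ι ⊕ κ) A) :
    f - inrReduce φ f = inlPart f + (inrQuot f ·) ⬝ᵥ φ := by
  have hsplit : inrReduce φ f = ∑ j, X (Sum.inr j) * inrQuot f j - (inrQuot f ·) ⬝ᵥ φ := by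
    simp only [inrReduce, dotProduct, ← Finset.sum_sub_distrib]
    exact Finset.sum_congr rfl fun j _ => by ring
  rw [hsplit]
  linear_combination eq_inlPart_add_sum_X_inr_mul_inrQuot f

theorem one_add_weightedOrder_le_inrReduce {φ : κ → MvPowerSeries (ι ⊕ κ) A}
    (hφ : ∀ j, 1 ≤ (X (Sum.inr j) - φ j).weightedOrder inlWeight) (f : MvPowerSeries (ι ⊕ κ) A) :
    1 + f.weightedOrder inlWeight ≤ (inrReduce φ f).weightedOrder inlWeight :=
  le_weightedOrder_sum _ _ _ fun j _ =>
    (add_le_add (hφ j) (weightedOrder_le_inrQuot f j)).trans (le_weightedOrder_mul _)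

end Decomposition

open WithPiTopology in
theorem exists_isInlSupported_eq_add_dotProduct [Fintype κ] (φ : κ → MvPowerSeries (ι ⊕ κ) A)
    (hφ : ∀ j, 1 ≤ (X (Sum.inr j) - φ j).weightedOrder inlWeight) (f : MvPowerSeries (ι ⊕ κ) A) :
    ∃ (c : MvPowerSeries (ι ⊕ κ) A) (q : κ → MvPowerSeries (ι ⊕ κ) A),
      IsInlSupported c ∧ f = c + q ⬝ᵥ φ := by
  let : LinearOrder κ := LinearOrder.lift' _ (Fintype.equivFin κ).injective
  let : TopologicalSpace A := ⊥
  have : DiscreteTopology A := ⟨rfl⟩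
  let F : ℕ → MvPowerSeries (ι ⊕ κ) A := fun k => (inrReduce φ)^[k] f
  have hF_succ : ∀ k, F (k + 1) = inrReduce φ (F k) := fun k => Function.iterate_succ_apply' _ _ _
  have hF_sub : ∀ k, F k - F (k + 1) = inlPart (F k) + (inrQuot (F k) ·) ⬝ᵥ φ := fun k => by
    rw [hF_succ, sub_inrReduce]
  have hF_order : ∀ k : ℕ, (k : ℕ∞) ≤ (F k).weightedOrder inlWeight := by
    intro k
    induction k with
    | zero => simp
    | succ k ih =>
      rw [hF_succ, Nat.cast_succ, add_comm]
      exact (add_le_add le_rfl ih).trans (one_add_weightedOrder_le_inrReduce hφ _)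
  have hc := (summable_of_natCast_le_weightedOrder inlWeight fun k =>
    (hF_order k).trans (weightedOrder_le_inlPart _)).hasSum
  have hq := fun j => (summable_of_natCast_le_weightedOrder inlWeight fun k =>
    (hF_order k).trans (weightedOrder_le_inrQuot _ j)).hasSum
  refine ⟨∑' k, inlPart (F k), fun j => ∑' k, inrQuot (F k) j, ?_, ?_⟩
  · intro m hm j
    by_contra hj
    refine hm (((hasSum_iff_hasSum_coeff.mp hc) m).unique ?_)
    simpa only [(isInlSupported_inlPart _).coeff_eq_zero hj] using hasSum_zero
  · have hsub : HasSum (fun k => F k - F (k + 1))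
        ((∑' k, inlPart (F k)) + (fun j => ∑' k, inrQuot (F k) j) ⬝ᵥ φ) := by
      simp only [hF_sub, dotProduct]
      exact hc.add (hasSum_sum fun j _ => (hq j).mul_right (φ j))
    exact (hsub.eq_of_sub_succ (tendsto_zero_of_natCast_le_weightedOrder inlWeight hF_order)).symm

theorem exists_span_range_eq_span_range_X_inr_sub [Fintype κ] (φ : κ → MvPowerSeries (ι ⊕ κ) A)
    (hφ : ∀ j, 1 ≤ (X (Sum.inr j) - φ j).weightedOrder inlWeight) :
    ∃ ε : κ → MvPowerSeries (ι ⊕ κ) A, (∀ i, IsInlSupported (ε i)) ∧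
      (∀ i, constantCoeff (ε i) = 0) ∧
      Ideal.span (Set.range φ) = Ideal.span (Set.range fun i => X (Sum.inr i) - ε i) := by
  classical
  choose ε Q hε hQ using fun i => exists_isInlSupported_eq_add_dotProduct φ hφ (X (Sum.inr i))
  have hφ_low : ∀ j m, weight inlWeight m = 0 → coeff m (φ j) = coeff m (X (Sum.inr j)) :=
    fun j m hm => (coeff_eq_of_lt_weightedOrder_sub inlWeight
      (by rw [hm, Nat.cast_zero]; exact zero_lt_one.trans_le (hφ j))).symm
  have hφ_const : ∀ j, constantCoeff (φ j) = 0 := fun j => by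
    simpa using hφ_low j 0 (map_zero _)
  have hφ_linear : ∀ j k, coeff (single (Sum.inr k) 1) (φ j) = (1 : Matrix κ κ A) k j :=
    fun j k => by
      simp [hφ_low j _ (weight_inlWeight_single_inr k), coeff_index_single_X, Matrix.one_apply]
  have hε_const : ∀ i, constantCoeff (ε i) = 0 := fun i => by
    simpa [dotProduct, hφ_const] using (congrArg constantCoeff (hQ i)).symm
  have hQ_const : (Matrix.of Q).map constantCoeff = 1 := by
    ext i k
    have := congrArg (coeff (single (Sum.inr k) 1)) (hQ i)
    rw [map_add, (hε i).coeff_eq_zero (j := k) (by simp), zero_add, dotProduct, map_sum] at this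
    simp only [coeff_index_single_mul_of_constantCoeff_eq_zero (hφ_const _), hφ_linear,
      coeff_index_single_X, Sum.inr.injEq, Matrix.one_apply, mul_ite, mul_one, mul_zero,
      Finset.sum_ite_eq, Finset.mem_univ, if_true] at this
    rw [Matrix.map_apply, Matrix.of_apply, ← this, Matrix.one_apply]
    exact if_congr eq_comm rfl rfl
  have hU : (fun i => X (Sum.inr i) - ε i) = Matrix.of Q *ᵥ φ :=
    funext fun i => by rw [hQ i, add_sub_cancel_left]; rfl
  have hQ_unit : IsUnit (Matrix.of Q) :=
    Matrix.isUnit_of_isUnit_map_constantCoeff (hQ_const ▸ isUnit_one)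
  exact ⟨ε, hε, hε_const, by rw [hU, Ideal.span_range_mulVec hQ_unit]⟩

end MvPowerSeries

theorem stmt_17_general (d g : ℕ)
    (φ : Fin g → MvPowerSeries (Fin d ⊕ Fin g) ℂ)
    (hφ : ∀ i, setXToZero d g (φ i) = MvPowerSeries.X i) :
    ∃ ε : Fin g → MvPowerSeries (Fin d ⊕ Fin g) ℂ,
      (∀ i, ∀ m : Fin d ⊕ Fin g →₀ ℕ, MvPowerSeries.coeff m (ε i) ≠ 0 →
        ∀ j : Fin g, m (Sum.inr j) = 0) ∧
      (∀ i, MvPowerSeries.constantCoeff (ε i) = 0) ∧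
      Ideal.span (Set.range φ)
        = Ideal.span (Set.range fun i => MvPowerSeries.X (Sum.inr i) - ε i) := by
  exact MvPowerSeries.exists_span_range_eq_span_range_X_inr_sub φ fun i =>
    MvPowerSeries.one_le_weightedOrder_X_inr_sub_of_killCompl_eq
      ((MvPowerSeries.ext fun n => MvPowerSeries.coeff_killCompl _ n).trans (hφ i))

/-- (Implicit function theorem style statement.) If
`φ₁, …, φ_g ∈ ℂ[[X₁,…,X_d,U₁,…,U_g]]` satisfy `φ_i(0, U) = U_i`, then there exist power series
`ε₁, …, ε_g ∈ ℂ[[X₁,…,X_d]]` (i.e. with all exponents supported on the `X`-variables) with zero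
constant term such that the ideals `(φ₁, …, φ_g)` and `(U₁ - ε₁, …, U_g - ε_g)` coincide. -/
theorem stmt_17 (d g : ℕ) (hg : 1 ≤ g)
    (φ : Fin g → MvPowerSeries (Fin d ⊕ Fin g) ℂ)
    (hφ : ∀ i, setXToZero d g (φ i) = MvPowerSeries.X i) :
    ∃ ε : Fin g → MvPowerSeries (Fin d ⊕ Fin g) ℂ,
      (∀ i, ∀ m : Fin d ⊕ Fin g →₀ ℕ, MvPowerSeries.coeff m (ε i) ≠ 0 →
        ∀ j : Fin g, m (Sum.inr j) = 0) ∧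
      (∀ i, MvPowerSeries.constantCoeff (ε i) = 0) ∧
      Ideal.span (Set.range φ)
        = Ideal.span (Set.range fun i => MvPowerSeries.X (Sum.inr i) - ε i) :=
  stmt_17_general d g φ hφ
end
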